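/- arXiv:1912.03331 — 3 statements merged into one kernel-verified Lean document; each statement's English description precedes it below -/
import Mathlib

section
/- Let m ≥ 3 be an integer, w ∈ ℤ, α ∈ ℂ, and λ ∈ ℂ (with λ = 0 when m is odd). The normal form (TE)-structure NF(α, λ) over the germ at 0 of the F-manifold I₂(m) admits a formal pairing of weight w if and only if λ = 0 and α = w/2. In that case, the formal pairings of weight w are exactly the constant matrices P = c·[[0,1],[1,0]] with c ∈ ℂ, c ≠ 0. -/
open Matrix

noncomputable section

abbrev R2 : Type := MvPowerSeries (Fin 2) ℂ
abbrev RZ : Type := PowerSeries R2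
abbrev Mat2 : Type := Matrix (Fin 2) (Fin 2) RZ

def t1 : R2 := MvPowerSeries.X 0
def t2 : R2 := MvPowerSeries.X 1

/-- Formal partial derivative `∂/∂tᵢ` on `ℂ[[t₁,t₂]]`. -/
def pd (i : Fin 2) (f : R2) : R2 :=
  fun d => ((d i : ℂ) + 1) * MvPowerSeries.coeff (R := ℂ) (d + Finsupp.single i 1) f

/-- Formal partial derivative `∂/∂tᵢ` on `R[[z]]`, acting coefficientwise. -/
def pdZ (i : Fin 2) (f : RZ) : RZ :=
  PowerSeries.mk fun k => pd i (PowerSeries.coeff (R := R2) k f)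

def pdM (i : Fin 2) (X : Mat2) : Mat2 := X.map (pdZ i)

def dzM (X : Mat2) : Mat2 := X.map PowerSeries.derivativeFun

def coefM (k : ℕ) (X : Mat2) : Matrix (Fin 2) (Fin 2) R2 :=
  X.map (PowerSeries.coeff (R := R2) k)

def z : RZ := PowerSeries.X

def cR : R2 →+* RZ := PowerSeries.C (R := R2)

def cC (a : ℂ) : RZ := cR (MvPowerSeries.C (σ := Fin 2) (R := ℂ) a)

def C1 : Matrix (Fin 2) (Fin 2) R2 := 1
def C2 (m : ℕ) : Matrix (Fin 2) (Fin 2) R2 := !![0, t2 ^ (m - 2); 1, 0]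
def Dm : Matrix (Fin 2) (Fin 2) R2 := !![1, 0; 0, -1]
def Em : Matrix (Fin 2) (Fin 2) R2 := !![0, 1; 0, 0]

def mR (X : Matrix (Fin 2) (Fin 2) R2) : Mat2 := X.map cR

structure IsT (m : ℕ) (A₁ A₂ : Mat2) : Prop where
  flat : z • pdM 0 A₂ - z • pdM 1 A₁ + (A₁ * A₂ - A₂ * A₁) = 0
  init1 : coefM 0 A₁ = C1
  init2 : coefM 0 A₂ * coefM 0 A₂ = t2 ^ (m - 2) • C1
  nonzero : (coefM 0 A₂).map (MvPowerSeries.constantCoeff (σ := Fin 2) (R := ℂ)) ≠ 0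

def GaugeT (A₁ A₂ A₁' A₂' : Mat2) : Prop :=
  ∃ T : Mat2, IsUnit T ∧
    z • pdM 0 T + A₁ * T - T * A₁' = 0 ∧
    z • pdM 1 T + A₂ * T - T * A₂' = 0

def PolyT2 (m : ℕ) (f : RZ) : Prop :=
  ∀ (k : ℕ) (d : Fin 2 →₀ ℕ),
    MvPowerSeries.coeff (R := ℂ) d (PowerSeries.coeff (R := R2) k f) ≠ 0 → d 0 = 0 ∧ d 1 + 4 ≤ m

def NA₂ (m : ℕ) (f : RZ) : Mat2 := mR (C2 m) + (z * f) • mR Em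

/-- A formal (TE)-structure over the germ at 0 of the F-manifold `I₂(m)` with its Euler
field `E = t₁∂₁ + (2/m)t₂∂₂`. -/
structure IsTE (m : ℕ) (A₁ A₂ B : Mat2) : Prop where
  isT : IsT m A₁ A₂
  flatB1 : z • pdM 0 B - (z * z) • dzM A₁ + z • A₁ + (A₁ * B - B * A₁) = 0
  flatB2 : z • pdM 1 B - (z * z) • dzM A₂ + z • A₂ + (A₂ * B - B * A₂) = 0
  initB : coefM 0 B = -(t1 • C1) - (((2 : ℂ) / (m : ℂ)) • t2) • coefM 0 A₂

/-- Formal gauge equivalence of (TE)-structures. -/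
def GaugeTE (A₁ A₂ B A₁' A₂' B' : Mat2) : Prop :=
  ∃ T : Mat2, IsUnit T ∧
    z • pdM 0 T + A₁ * T - T * A₁' = 0 ∧
    z • pdM 1 T + A₂ * T - T * A₂' = 0 ∧
    (z * z) • dzM T + B * T - T * B' = 0

open scoped Classical in
/-- The series `f` of the normal form: `0` if `m` is odd, `λ·t₂^{(m−4)/2}` if `m` is even. -/
def fNF (m : ℕ) (lam : ℂ) : RZ :=
  if Even m then cR (lam • t2 ^ ((m - 4) / 2)) else 0

/-- The matrix `B` of the normal form `NF(α, λ)`. -/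
def NFB (m : ℕ) (α lam : ℂ) : Mat2 :=
  (-(cR t1)) • mR C1 - (cC ((2 : ℂ) / (m : ℂ)) * cR t2) • mR (C2 m)
    + z • (cC α • mR C1 + cC (((2 : ℂ) - (m : ℂ)) / (2 * (m : ℂ))) • mR Dm
        - (cC ((2 : ℂ) / (m : ℂ)) * cR t2 * fNF m lam) • mR Em)

/-- The substitution `z ↦ −z` on `R[[z]]`. -/
def negZ (f : RZ) : RZ :=
  PowerSeries.mk fun k => (-1 : R2) ^ k * PowerSeries.coeff (R := R2) k f

/-- The substitution `z ↦ −z` on matrices over `R[[z]]`, entrywise. -/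
def negM (X : Mat2) : Mat2 := X.map negZ

/-- A formal pairing of weight `w` for a triple `(A₁, A₂, B)`: a matrix `P ∈ M₂(R[[z]])`
with `P(−z)ᵀ = P(z)`, invertible `z⁰`-coefficient, and the flatness properties
`z∂ᵢP(z) = Aᵢ(z)ᵀP(z) − P(z)Aᵢ(−z)` and
`z²∂_zP(z) = −w·z·P(z) + B(z)ᵀP(z) − P(z)B(−z)`. -/
def IsPairing (w : ℤ) (A₁ A₂ B P : Mat2) : Prop :=
  (negM P)ᵀ = P ∧ IsUnit (coefM 0 P) ∧
  z • pdM 0 P = A₁ᵀ * P - P * negM A₁ ∧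
  z • pdM 1 P = A₂ᵀ * P - P * negM A₂ ∧
  (z * z) • dzM P = -((w : ℂ) • (z • P)) + Bᵀ * P - P * negM B

namespace Aux

abbrev Mc : ℂ →+* R2 := MvPowerSeries.C (σ := Fin 2) (R := ℂ)
abbrev cfZ (k : ℕ) : RZ →ₗ[R2] R2 := PowerSeries.coeff (R := R2) k
abbrev cf2 (d : Fin 2 →₀ ℕ) : R2 →ₗ[ℂ] ℂ := MvPowerSeries.coeff (R := ℂ) d

lemma coeff_pd (i : Fin 2) (f : R2) (d : Fin 2 →₀ ℕ) :
    cf2 d (pd i f) = ((d i : ℂ) + 1) * cf2 (d + Finsupp.single i 1) f := rfl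

lemma pd_C (i : Fin 2) (a : ℂ) : pd i (Mc a) = 0 := by
  ext d
  rw [coeff_pd]
  rw [MvPowerSeries.coeff_C]
  rw [if_neg, mul_zero, map_zero]
  intro h
  have := (Finsupp.ext_iff.mp h) i
  simp at this

lemma coeff_negZ (f : RZ) (k : ℕ) : cfZ k (negZ f) = (-1 : R2) ^ k * cfZ k f :=
  PowerSeries.coeff_mk _ _

lemma negZ_eq (f : RZ) : negZ f = PowerSeries.rescale (-1 : R2) f :=
  PowerSeries.ext fun k => by rw [coeff_negZ, PowerSeries.coeff_rescale]

lemma negZ_mul (f g : RZ) : negZ (f * g) = negZ f * negZ g := by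
  simp [negZ_eq, _root_.map_mul]

lemma negZ_add (f g : RZ) : negZ (f + g) = negZ f + negZ g := by
  simp [negZ_eq, _root_.map_add]

lemma negZ_neg (f : RZ) : negZ (-f) = -negZ f := by simp [negZ_eq]

lemma negZ_cR (r : R2) : negZ (cR r) = cR r := by
  ext k
  simp only [negZ_eq, PowerSeries.coeff_rescale, cR, PowerSeries.coeff_C]
  rcases eq_or_ne k 0 with h | h <;> simp [h]

lemma negZ_z : negZ z = -z := by
  ext k
  simp only [negZ_eq, PowerSeries.coeff_rescale, z, PowerSeries.coeff_X, map_neg]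
  rcases eq_or_ne k 1 with h | h <;> simp [h, PowerSeries.coeff_X]

end Aux
namespace Aux

lemma coefM_apply (k : ℕ) (X : Mat2) (i j : Fin 2) :
    coefM k X i j = cfZ k (X i j) := rfl

lemma coefM_add (k : ℕ) (X Y : Mat2) : coefM k (X + Y) = coefM k X + coefM k Y := by
  ext i j; simp [coefM_apply, Matrix.add_apply]

lemma coefM_sub (k : ℕ) (X Y : Mat2) : coefM k (X - Y) = coefM k X - coefM k Y := by
  ext i j; simp [coefM_apply, Matrix.sub_apply]

lemma coefM_neg (k : ℕ) (X : Mat2) : coefM k (-X) = -coefM k X := by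
  ext i j; simp [coefM_apply, Matrix.neg_apply]

lemma algC2 (a : ℂ) : algebraMap ℂ R2 a = Mc a := rfl

lemma smulC2 (a : ℂ) (x : R2) : a • x = Mc a * x := by
  rw [Algebra.smul_def, algC2]

lemma smulC (a : ℂ) (x : RZ) : a • x = cC a * x := by
  rw [Algebra.smul_def, PowerSeries.algebraMap_apply, algC2]; rfl

lemma coefM_smulC (k : ℕ) (a : ℂ) (X : Mat2) : coefM k (a • X) = a • coefM k X := by
  ext i j
  simp only [coefM_apply, Matrix.smul_apply]
  rw [smulC, cC, cR, PowerSeries.coeff_C_mul, ← smulC2]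

lemma coefM_smul_cR (k : ℕ) (r : R2) (X : Mat2) : coefM k (cR r • X) = r • coefM k X := by
  ext i j
  simp only [coefM_apply, Matrix.smul_apply, smul_eq_mul, cR, PowerSeries.coeff_C_mul]

lemma coefM_z_smul_succ (k : ℕ) (X : Mat2) : coefM (k + 1) (z • X) = coefM k X := by
  ext i j
  simp only [coefM_apply, Matrix.smul_apply, smul_eq_mul, z, PowerSeries.coeff_succ_X_mul]

lemma coefM_z_smul_zero (X : Mat2) : coefM 0 (z • X) = 0 := by
  ext i j
  simp only [coefM_apply, Matrix.smul_apply, smul_eq_mul, z, PowerSeries.coeff_zero_X_mul,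
    Matrix.zero_apply]

lemma coefM_mR_mul (k : ℕ) (A : Matrix (Fin 2) (Fin 2) R2) (X : Mat2) :
    coefM k (mR A * X) = A * coefM k X := by
  ext i j
  simp only [coefM_apply, Matrix.mul_apply, Fin.sum_univ_two, map_add, mR, Matrix.map_apply,
    cR, PowerSeries.coeff_C_mul]

lemma coefM_mul_mR (k : ℕ) (A : Matrix (Fin 2) (Fin 2) R2) (X : Mat2) :
    coefM k (X * mR A) = coefM k X * A := by
  ext i j
  have : ∀ (x : RZ) (r : R2), cfZ k (x * cR r) = cfZ k x * r := by
    intro x r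
    rw [mul_comm, mul_comm (cfZ k x) r, cR, PowerSeries.coeff_C_mul]
  simp only [coefM_apply, Matrix.mul_apply, Fin.sum_univ_two, map_add, mR, Matrix.map_apply, this]

lemma coefM_negM (k : ℕ) (X : Mat2) : coefM k (negM X) = (-1 : R2) ^ k • coefM k X := by
  ext i j
  simp only [coefM_apply, negM, Matrix.map_apply, coeff_negZ, Matrix.smul_apply, smul_eq_mul]

lemma coefM_pdM (i : Fin 2) (k : ℕ) (X : Mat2) :
    coefM k (pdM i X) = (coefM k X).map (pd i) := by
  ext a b
  simp only [coefM_apply, pdM, Matrix.map_apply, pdZ, PowerSeries.coeff_mk]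

lemma coefM_z2_dz (k : ℕ) (X : Mat2) :
    coefM (k + 1) ((z * z) • dzM X) = (k : ℂ) • coefM k X := by
  ext i j
  simp only [coefM_apply, Matrix.smul_apply, smul_eq_mul, Matrix.map_apply, dzM, mul_assoc, z]
  rw [PowerSeries.coeff_succ_X_mul]
  cases k with
  | zero => simp [PowerSeries.coeff_zero_X_mul]
  | succ n =>
      rw [PowerSeries.coeff_succ_X_mul,
        show PowerSeries.derivativeFun (X i j) = PowerSeries.derivative R2 (X i j) from rfl,
        PowerSeries.coeff_derivative]
      rw [smulC2, map_natCast]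
      push_cast
      ring

lemma coefM_transpose (k : ℕ) (X : Mat2) : coefM k Xᵀ = (coefM k X)ᵀ := by
  ext i j; rfl

end Aux
namespace Aux

lemma mR_one : mR C1 = 1 := by
  ext i j
  fin_cases i <;> fin_cases j <;> simp [mR, C1, Matrix.one_apply]

lemma negM_add (X Y : Mat2) : negM (X + Y) = negM X + negM Y := by
  ext i j; simp [negM, Matrix.add_apply, negZ_add]

lemma negM_neg (X : Mat2) : negM (-X) = -negM X := by
  ext i j; simp [negM, Matrix.neg_apply, negZ_neg]

lemma negM_sub (X Y : Mat2) : negM (X - Y) = negM X - negM Y := by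
  rw [sub_eq_add_neg, negM_add, negM_neg, ← sub_eq_add_neg]

lemma negM_mR (A : Matrix (Fin 2) (Fin 2) R2) : negM (mR A) = mR A := by
  ext i j; simp [negM, mR, negZ_cR]

lemma negM_one : negM (1 : Mat2) = 1 := by
  rw [← mR_one, negM_mR]

lemma negM_smul_cR (r : R2) (X : Mat2) : negM (cR r • X) = cR r • negM X := by
  ext i j
  simp only [negM, Matrix.map_apply, Matrix.smul_apply, smul_eq_mul, negZ_mul, negZ_cR]

lemma negM_z_smul (X : Mat2) : negM (z • X) = -(z • negM X) := by
  ext i j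
  simp only [negM, Matrix.map_apply, Matrix.smul_apply, Matrix.neg_apply, smul_eq_mul,
    negZ_mul, negZ_z, neg_mul]

lemma negM_zmul_smul (r : R2) (X : Mat2) : negM ((z * cR r) • X) = -((z * cR r) • negM X) := by
  ext i j
  simp only [negM, Matrix.map_apply, Matrix.smul_apply, Matrix.neg_apply, smul_eq_mul,
    negZ_mul, negZ_z, negZ_cR]
  ring

lemma mR_transpose (A : Matrix (Fin 2) (Fin 2) R2) : (mR A)ᵀ = mR Aᵀ := by
  ext i j; rfl

lemma fNF_eq (m : ℕ) (lam : ℂ) :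
    fNF m lam = cR (if Even m then lam • t2 ^ ((m - 4) / 2) else 0) := by
  rw [fNF]
  split <;> simp

end Aux
namespace Aux

lemma Dm_transpose : Dmᵀ = Dm := by
  ext i j; fin_cases i <;> fin_cases j <;> rfl

lemma negM_smul (r : RZ) (hr : negZ r = r) (X : Mat2) : negM (r • X) = r • negM X := by
  ext i j
  simp only [negM, Matrix.map_apply, Matrix.smul_apply, smul_eq_mul, negZ_mul, hr]

lemma negZ_cC (a : ℂ) : negZ (cC a) = cC a := negZ_cR _

lemma coefM_zmul_smul_succ (k : ℕ) (r : R2) (X : Mat2) :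
    coefM (k + 1) ((z * cR r) • X) = r • coefM k X := by
  rw [mul_smul, coefM_z_smul_succ, coefM_smul_cR]

lemma coefM_zmul_smul_zero (r : R2) (X : Mat2) :
    coefM 0 ((z * cR r) • X) = 0 := by
  rw [mul_smul, coefM_z_smul_zero]

section Necessity
set_option maxHeartbeats 1000000
set_option synthInstance.maxHeartbeats 400000

variable {m : ℕ} {w : ℤ} {α lam : ℂ} {P : Mat2} {gg : R2}

lemma hA2_expand (hg : fNF m lam = cR gg) :
    (NA₂ m (fNF m lam))ᵀ * P - P * negM (NA₂ m (fNF m lam))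
      = (mR (C2 m)ᵀ * P - P * mR (C2 m)) + (z * cR gg) • (mR Emᵀ * P + P * mR Em) := by
  rw [NA₂, hg]
  simp only [Matrix.transpose_add, Matrix.transpose_smul, mR_transpose,
    negM_add, negM_mR, negM_zmul_smul]
  simp only [add_mul, mul_add, mul_neg, Matrix.smul_mul, Matrix.mul_smul, smul_add]
  abel

lemma hB_expand (hg : fNF m lam = cR gg) :
    (NFB m α lam)ᵀ * P - P * negM (NFB m α lam)
      = -((cC ((2:ℂ)/m) * cR t2) • (mR (C2 m)ᵀ * P - P * mR (C2 m)))
        + z • (cC α • P + cC α • P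
          + cC (((2:ℂ) - m)/(2*m)) • (mR Dm * P + P * mR Dm)
          - (cC ((2:ℂ)/m) * cR t2 * cR gg) • (mR Emᵀ * P + P * mR Em)) := by
  have h1 : negZ (-(cR t1)) = -(cR t1) := by rw [negZ_neg, negZ_cR]
  have h2 : negZ (cC ((2:ℂ)/m) * cR t2) = cC ((2:ℂ)/m) * cR t2 := by
    rw [negZ_mul, negZ_cC, negZ_cR]
  have h3 : negZ (cC (((2:ℂ) - m)/(2*m))) = cC (((2:ℂ) - m)/(2*m)) := negZ_cC _
  have h4 : negZ (cC ((2:ℂ)/m) * cR t2 * cR gg) = cC ((2:ℂ)/m) * cR t2 * cR gg := by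
    rw [negZ_mul, h2, negZ_cR]
  rw [NFB, hg, mR_one]
  simp only [Matrix.transpose_add, Matrix.transpose_sub, Matrix.transpose_smul, mR_transpose,
    Dm_transpose, Matrix.transpose_one]
  simp only [negM_add, negM_sub, negM_z_smul, negM_one, negM_mR,
    negM_smul _ h1, negM_smul _ h2, negM_smul _ h3, negM_smul _ h4, negM_smul _ (negZ_cC α)]
  simp only [add_mul, sub_mul, mul_add, mul_sub, mul_neg, neg_mul, Matrix.smul_mul,
    Matrix.mul_smul, smul_add, smul_sub, smul_neg, Matrix.mul_one, Matrix.one_mul]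
  abel

end Necessity

end Aux
namespace Aux

lemma smulC_M (a : ℂ) (X : Mat2) : cC a • X = a • X := by
  ext i j
  simp only [Matrix.smul_apply, smul_eq_mul, ← smulC]

lemma coefM_smul_cC (k : ℕ) (a : ℂ) (X : Mat2) : coefM k (cC a • X) = a • coefM k X := by
  rw [smulC_M, coefM_smulC]

section Necessity2
set_option maxHeartbeats 1000000
set_option synthInstance.maxHeartbeats 400000

variable {m : ℕ} {w : ℤ} {α lam : ℂ} {P : Mat2} {gg : R2}

lemma E3 (hp3 : z • pdM 0 P = (mR C1)ᵀ * P - P * negM (mR C1)) (k : ℕ) :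
    (coefM k P).map (pd 0) = 0 := by
  rw [mR_one, negM_one, Matrix.transpose_one, Matrix.one_mul, Matrix.mul_one, sub_self] at hp3
  have := congrArg (coefM (k + 1)) hp3
  rw [coefM_z_smul_succ, coefM_pdM] at this
  rw [this]
  ext i j
  simp [coefM_apply]

lemma E40 (hg : fNF m lam = cR gg)
    (hp4 : z • pdM 1 P = (NA₂ m (fNF m lam))ᵀ * P - P * negM (NA₂ m (fNF m lam))) :
    (C2 m)ᵀ * coefM 0 P - coefM 0 P * C2 m = 0 := by
  rw [hA2_expand hg] at hp4
  have := congrArg (coefM 0) hp4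
  rw [coefM_z_smul_zero, coefM_add, coefM_zmul_smul_zero, coefM_sub,
    coefM_mR_mul, coefM_mul_mR, add_zero] at this
  exact this.symm

lemma E4succ (hg : fNF m lam = cR gg)
    (hp4 : z • pdM 1 P = (NA₂ m (fNF m lam))ᵀ * P - P * negM (NA₂ m (fNF m lam)))
    (k : ℕ) :
    (C2 m)ᵀ * coefM (k+1) P - coefM (k+1) P * C2 m
      = (coefM k P).map (pd 1) - gg • (Emᵀ * coefM k P + coefM k P * Em) := by
  rw [hA2_expand hg] at hp4
  have := congrArg (coefM (k + 1)) hp4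
  rw [coefM_z_smul_succ, coefM_pdM, coefM_add, coefM_zmul_smul_succ, coefM_sub,
    coefM_mR_mul, coefM_mul_mR, coefM_add, coefM_mR_mul, coefM_mul_mR] at this
  rw [this]
  abel

lemma E5succ (hg : fNF m lam = cR gg)
    (hp5 : (z * z) • dzM P
      = -((w : ℂ) • (z • P)) + (NFB m α lam)ᵀ * P - P * negM (NFB m α lam))
    (k : ℕ) :
    (k : ℂ) • coefM k P
      = -((w : ℂ) • coefM k P)
        + -((Mc ((2:ℂ)/m) * t2) • ((C2 m)ᵀ * coefM (k+1) P - coefM (k+1) P * C2 m))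
        + (α • coefM k P + α • coefM k P
          + (((2:ℂ) - m)/(2*m)) • (Dm * coefM k P + coefM k P * Dm)
          - (Mc ((2:ℂ)/m) * t2 * gg) • (Emᵀ * coefM k P + coefM k P * Em)) := by
  rw [add_sub_assoc, hB_expand hg] at hp5
  have hu : cC ((2:ℂ)/m) * cR t2 = cR (Mc ((2:ℂ)/m) * t2) :=
    (RingHom.map_mul cR (Mc ((2:ℂ)/m)) t2).symm
  have hu2 : cC ((2:ℂ)/m) * cR t2 * cR gg = cR (Mc ((2:ℂ)/m) * t2 * gg) := by
    rw [hu, ← RingHom.map_mul]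
  rw [hu2, hu] at hp5
  have := congrArg (coefM (k + 1)) hp5
  simp only [coefM_z2_dz, coefM_add, coefM_sub, coefM_neg, coefM_smulC, coefM_smul_cC,
    coefM_smul_cR, coefM_z_smul_succ, coefM_mR_mul, coefM_mul_mR] at this
  rw [this]
  abel

lemma Estar (hg : fNF m lam = cR gg)
    (hp4 : z • pdM 1 P = (NA₂ m (fNF m lam))ᵀ * P - P * negM (NA₂ m (fNF m lam)))
    (hp5 : (z * z) • dzM P
      = -((w : ℂ) • (z • P)) + (NFB m α lam)ᵀ * P - P * negM (NFB m α lam))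
    (k : ℕ) :
    (k : ℂ) • coefM k P + (Mc ((2:ℂ)/m) * t2) • (coefM k P).map (pd 1)
      = -((w : ℂ) • coefM k P) + α • coefM k P + α • coefM k P
        + (((2:ℂ) - m)/(2*m)) • (Dm * coefM k P + coefM k P * Dm) := by
  have e5 := E5succ hg hp5 k
  rw [E4succ hg hp4 k] at e5
  rw [e5]
  simp only [smul_sub, smul_smul]
  abel

end Necessity2

end Aux
namespace Aux

lemma coeff_t2_pd (x : R2) (d : Fin 2 →₀ ℕ) :
    cf2 d (t2 * pd 1 x) = (d 1 : ℂ) * cf2 d x := by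
  rw [t2, MvPowerSeries.X_def, MvPowerSeries.coeff_monomial_mul]
  by_cases h : Finsupp.single (1 : Fin 2) 1 ≤ d
  · rw [if_pos h, one_mul, coeff_pd]
    have h1 : 1 ≤ d 1 := by
      simpa using (Finsupp.single_le_iff).mp h
    have hd : d - Finsupp.single 1 1 + Finsupp.single 1 1 = d := tsub_add_cancel_of_le h
    rw [hd, Finsupp.tsub_apply, Finsupp.single_apply, if_pos rfl]
    congr 1
    rw [Nat.cast_sub h1]
    push_cast
    ring
  · rw [if_neg h]
    have h1 : d 1 = 0 := by
      by_contra hne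
      exact h (Finsupp.single_le_iff.mpr (Nat.one_le_iff_ne_zero.mpr hne))
    rw [h1]
    simp

lemma pd0_coeff_zero (x : R2) (hx : pd 0 x = 0) (d : Fin 2 →₀ ℕ) (hd : d 0 ≠ 0) :
    cf2 d x = 0 := by
  have h1 : 1 ≤ d 0 := Nat.one_le_iff_ne_zero.mpr hd
  have hle : Finsupp.single (0 : Fin 2) 1 ≤ d := Finsupp.single_le_iff.mpr h1
  set d' : Fin 2 →₀ ℕ := d - Finsupp.single 0 1 with hd'
  have := congrArg (cf2 d') hx
  rw [coeff_pd, hd', tsub_add_cancel_of_le hle] at this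
  simp only [map_zero] at this
  have hne : (((d' 0 : ℕ) : ℂ) + 1) ≠ 0 := by
    have hcast : (((d' 0 : ℕ) : ℂ) + 1) = (((d' 0 + 1 : ℕ)) : ℂ) := by push_cast; ring
    rw [hcast]
    exact Nat.cast_ne_zero.mpr (Nat.succ_ne_zero (d' 0))
  rw [← hd'] at this
  exact (mul_eq_zero.mp this).resolve_left hne

lemma keyCoeff {m : ℕ} {x : R2} {k : ℕ} {c : ℂ} (h0 : pd 0 x = 0)
    (h : ∀ d : Fin 2 →₀ ℕ, (k : ℂ) * cf2 d x + (2:ℂ)/m * ((d 1 : ℂ) * cf2 d x) = c * cf2 d x)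
    (d : Fin 2 →₀ ℕ) (hd : cf2 d x ≠ 0) :
    d 0 = 0 ∧ (k : ℂ) + (2:ℂ)/m * (d 1 : ℂ) = c := by
  constructor
  · by_contra hne
    exact hd (pd0_coeff_zero x h0 d hne)
  · have := h d
    have h2 : ((k : ℂ) + (2:ℂ)/m * (d 1 : ℂ) - c) * cf2 d x = 0 := by linear_combination this
    rcases mul_eq_zero.mp h2 with h3 | h3
    · linear_combination h3
    · exact absurd h3 hd

lemma fin2_ext {d : Fin 2 →₀ ℕ} (h0 : d 0 = 0) (h1 : d 1 = 0) : d = 0 := by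
  ext i
  fin_cases i
  · exact h0
  · exact h1

end Aux
namespace Aux

section Entry
set_option maxHeartbeats 1000000
set_option synthInstance.maxHeartbeats 400000

variable {m : ℕ} {w : ℤ} {α lam : ℂ} {P : Mat2} {gg : R2}

lemma entry_h (hg : fNF m lam = cR gg)
    (hp4 : z • pdM 1 P = (NA₂ m (fNF m lam))ᵀ * P - P * negM (NA₂ m (fNF m lam)))
    (hp5 : (z * z) • dzM P
      = -((w : ℂ) • (z • P)) + (NFB m α lam)ᵀ * P - P * negM (NFB m α lam))
    (k : ℕ) (i j : Fin 2) (eps : ℂ)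
    (he : (Dm * coefM k P) i j + (coefM k P * Dm) i j = eps • coefM k P i j) :
    ∀ d : Fin 2 →₀ ℕ,
      (k : ℂ) * cf2 d (coefM k P i j) + (2:ℂ)/m * ((d 1 : ℂ) * cf2 d (coefM k P i j))
        = (2*α - w + eps * (((2:ℂ) - m)/(2*m))) * cf2 d (coefM k P i j) := by
  have e := congrFun (congrFun (Estar hg hp4 hp5 k) i) j
  simp only [Matrix.add_apply, Matrix.smul_apply, Matrix.neg_apply, Matrix.map_apply] at e
  rw [he, smul_eq_mul, smul_smul] at e
  intro d
  have e2 := congrArg (cf2 d) e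
  simp only [map_add, map_neg, LinearMap.map_smul] at e2
  rw [mul_assoc, MvPowerSeries.coeff_C_mul, coeff_t2_pd] at e2
  simp only [smul_eq_mul] at e2
  linear_combination e2

end Entry

end Aux
namespace Aux

lemma clear_denom {m k d1 : ℕ} {α w eps : ℂ} (hm0 : (m:ℂ) ≠ 0)
    (h : (k:ℂ) + 2/(m:ℂ) * (d1:ℂ) = 2*α - w + eps*(((2:ℂ) - m)/(2*m))) :
    (k:ℂ)*(2*m) + 4*(d1:ℂ) = (2*α - w)*(2*m) + eps*(2 - m) := by
  field_simp at h
  apply mul_left_cancel₀ hm0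
  linear_combination (m:ℂ) * h

lemma vanish_of_key {m : ℕ} {x : R2} {k : ℕ} {c : ℂ} (h0 : pd 0 x = 0)
    (h : ∀ d : Fin 2 →₀ ℕ, (k : ℂ) * cf2 d x + (2:ℂ)/m * ((d 1 : ℂ) * cf2 d x) = c * cf2 d x)
    (hc : ∀ d1 : ℕ, (k:ℂ) + 2/(m:ℂ) * (d1:ℂ) ≠ c) : x = 0 := by
  apply MvPowerSeries.ext
  intro d
  rw [map_zero]
  by_contra hne
  exact hc (d 1) (keyCoeff h0 h d hne).2

lemma const_of {x : R2} (h : ∀ d : Fin 2 →₀ ℕ, d ≠ 0 → cf2 d x = 0) :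
    x = Mc (cf2 0 x) := by
  apply MvPowerSeries.ext
  intro d
  rw [MvPowerSeries.coeff_C]
  split
  · next hd => rw [hd]
  · next hd => exact h d hd

-- case eps = 0, α = w/2, k ≥ 1
lemma hc_offdiag {m : ℕ} (hm : 3 ≤ m) {w : ℂ} {k : ℕ} (hk : 1 ≤ k) (d1 : ℕ) :
    (k:ℂ) + 2/(m:ℂ) * (d1:ℂ) ≠ 2*((w:ℂ)/2) - w + 0*(((2:ℂ) - m)/(2*m)) := by
  have hm0 : (m:ℂ) ≠ 0 := Nat.cast_ne_zero.mpr (by omega)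
  intro h
  have h2 := clear_denom hm0 h
  have h3 : ((k*(2*m) + 4*d1 : ℕ) : ℂ) = ((0:ℕ):ℂ) := by push_cast; linear_combination h2
  have h4 := Nat.cast_injective h3
  have : 2*m ≤ k*(2*m) := Nat.le_mul_of_pos_left _ (by omega)
  omega

-- case eps = 2, any k, α = w/2
lemma hc_diag00 {m : ℕ} (hm : 3 ≤ m) {w : ℂ} (k : ℕ) (d1 : ℕ) :
    (k:ℂ) + 2/(m:ℂ) * (d1:ℂ) ≠ 2*((w:ℂ)/2) - w + 2*(((2:ℂ) - m)/(2*m)) := by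
  have hm0 : (m:ℂ) ≠ 0 := Nat.cast_ne_zero.mpr (by omega)
  intro h
  have h2 := clear_denom hm0 h
  have h3 : ((k*(2*m) + 4*d1 + 2*m : ℕ) : ℂ) = ((4:ℕ):ℂ) := by push_cast; linear_combination h2
  have h4 := Nat.cast_injective h3
  omega

-- case eps = -2, k ≥ 1, α = w/2
lemma hc_diag11 {m : ℕ} (hm : 3 ≤ m) {w : ℂ} {k : ℕ} (hk : 1 ≤ k) (d1 : ℕ) :
    (k:ℂ) + 2/(m:ℂ) * (d1:ℂ) ≠ 2*((w:ℂ)/2) - w + (-2)*(((2:ℂ) - m)/(2*m)) := by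
  have hm0 : (m:ℂ) ≠ 0 := Nat.cast_ne_zero.mpr (by omega)
  intro h
  have h2 := clear_denom hm0 h
  have h3 : ((k*(2*m) + 4*d1 + 4 : ℕ) : ℂ) = ((2*m:ℕ):ℂ) := by push_cast; linear_combination h2
  have h4 := Nat.cast_injective h3
  have : 2*m ≤ k*(2*m) := Nat.le_mul_of_pos_left _ (by omega)
  omega

-- constancy for off-diagonal at k = 0 with α = w/2
lemma offdiag_const {m : ℕ} (hm : 3 ≤ m) {w : ℂ} {x : R2} (h0 : pd 0 x = 0)
    (h : ∀ d : Fin 2 →₀ ℕ, (0 : ℂ) * cf2 d x + (2:ℂ)/m * ((d 1 : ℂ) * cf2 d x)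
      = (2*((w:ℂ)/2) - w + 0*(((2:ℂ) - m)/(2*m))) * cf2 d x) :
    x = Mc (cf2 0 x) := by
  have hm0 : (m:ℂ) ≠ 0 := Nat.cast_ne_zero.mpr (by omega)
  apply const_of
  intro d hd
  by_contra hne
  have h' : ∀ d : Fin 2 →₀ ℕ, ((0:ℕ) : ℂ) * cf2 d x + (2:ℂ)/m * ((d 1 : ℂ) * cf2 d x)
      = (2*((w:ℂ)/2) - w + 0*(((2:ℂ) - m)/(2*m))) * cf2 d x := by
    intro d; rw [Nat.cast_zero]; exact h d
  have key := keyCoeff (k := 0) h0 h' d hne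
  have h2 := clear_denom hm0 key.2
  have h3 : ((4*(d 1) : ℕ) : ℂ) = ((0:ℕ):ℂ) := by push_cast; linear_combination h2
  have h4 := Nat.cast_injective h3
  exact hd (fin2_ext key.1 (by omega))
end Aux
namespace Aux

lemma pd_zero (i : Fin 2) : pd i (0 : R2) = 0 := by
  ext d
  rw [coeff_pd]
  simp

lemma t2_ne : (t2 : R2) ≠ 0 := by
  intro h
  have := congrArg (cf2 (Finsupp.single 1 1)) h
  rw [t2, MvPowerSeries.X_def, map_zero, MvPowerSeries.coeff_monomial_same] at this
  exact one_ne_zero this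

lemma C2T {m : ℕ} : (C2 m)ᵀ = !![0, 1; t2 ^ (m - 2), 0] := by
  ext i j; fin_cases i <;> fin_cases j <;> rfl

lemma EmT : Emᵀ = !![(0:R2), 0; 1, 0] := by
  ext i j; fin_cases i <;> fin_cases j <;> rfl

lemma coefM_zero_mR (X : Matrix (Fin 2) (Fin 2) R2) : coefM 0 (mR X) = X := by
  ext i j
  simp [coefM_apply, mR, Matrix.map_apply, cR, PowerSeries.coeff_zero_C]

lemma coefM_succ_mR (k : ℕ) (X : Matrix (Fin 2) (Fin 2) R2) : coefM (k+1) (mR X) = 0 := by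
  ext i j
  simp [coefM_apply, mR, Matrix.map_apply, cR, PowerSeries.coeff_C]

lemma mat_eq_of_coef {X Y : Mat2} (h : ∀ k, coefM k X = coefM k Y) : X = Y := by
  apply Matrix.ext
  intro i j
  apply PowerSeries.ext
  intro k
  exact congrFun (congrFun (h k) i) j

lemma Mc_ne {a : ℂ} (ha : a ≠ 0) : Mc a ≠ 0 := by
  intro h
  have := congrArg (MvPowerSeries.constantCoeff (σ := Fin 2) (R := ℂ)) h
  rw [MvPowerSeries.constantCoeff_C, map_zero] at this
  exact ha this

section Main
set_option maxHeartbeats 1000000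
set_option synthInstance.maxHeartbeats 400000

variable {m : ℕ} {w : ℤ} {α lam : ℂ} {P : Mat2} {gg : R2}

lemma necessity (hm : 3 ≤ m) (hg : fNF m lam = cR gg)
    (hP : IsPairing w (mR C1) (NA₂ m (fNF m lam)) (NFB m α lam) P) :
    α = (w:ℂ)/2 ∧ gg = 0 ∧ ∃ c : ℂ, c ≠ 0 ∧ P = cC c • mR !![0, 1; 1, 0] := by
  obtain ⟨hsym, hunit, hp3, hp4, hp5⟩ := hP
  have hm0 : (m:ℂ) ≠ 0 := Nat.cast_ne_zero.mpr (by omega)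
  have h0 : ∀ (k : ℕ) (i j : Fin 2), pd 0 (coefM k P i j) = 0 := by
    intro k i j
    have := congrFun (congrFun (E3 hp3 k) i) j
    simpa [Matrix.map_apply] using this
  have he00 : ∀ k : ℕ, (Dm * coefM k P) 0 0 + (coefM k P * Dm) 0 0
      = (2:ℂ) • coefM k P 0 0 := by
    intro k
    simp [Dm, Matrix.mul_apply, Fin.sum_univ_two, smulC2, map_ofNat]
    ring
  have he01 : ∀ k : ℕ, (Dm * coefM k P) 0 1 + (coefM k P * Dm) 0 1
      = (0:ℂ) • coefM k P 0 1 := by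
    intro k
    simp [Dm, Matrix.mul_apply, Fin.sum_univ_two, smulC2]
  have he10 : ∀ k : ℕ, (Dm * coefM k P) 1 0 + (coefM k P * Dm) 1 0
      = (0:ℂ) • coefM k P 1 0 := by
    intro k
    simp [Dm, Matrix.mul_apply, Fin.sum_univ_two, smulC2]
  have he11 : ∀ k : ℕ, (Dm * coefM k P) 1 1 + (coefM k P * Dm) 1 1
      = (-2:ℂ) • coefM k P 1 1 := by
    intro k
    simp [Dm, Matrix.mul_apply, Fin.sum_univ_two, smulC2, map_neg, map_ofNat]
    ring
  have hsym0 : (coefM 0 P)ᵀ = coefM 0 P := by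
    have := congrArg (coefM 0) hsym
    rwa [coefM_transpose, coefM_negM, pow_zero, one_smul] at this
  have h10eq : coefM 0 P 1 0 = coefM 0 P 0 1 := by
    have := congrFun (congrFun hsym0 0) 1
    simpa [Matrix.transpose_apply] using this
  have h11eq : coefM 0 P 1 1 = t2 ^ (m - 2) * coefM 0 P 0 0 := by
    have h := E40 hg hp4
    rw [C2T] at h
    have := congrFun (congrFun h 0) 1
    simp [C2, Matrix.mul_apply, Fin.sum_univ_two, Matrix.sub_apply,
      Matrix.zero_apply, -Matrix.cons_mul] at this
    linear_combination this
  set b0 := cf2 0 (coefM 0 P 0 1) with hb0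
  have hdet : IsUnit (coefM 0 P).det := (Matrix.isUnit_iff_isUnit_det _).mp hunit
  have hccdet := hdet.map (MvPowerSeries.constantCoeff (σ := Fin 2) (R := ℂ))
  have hccdet_eq : MvPowerSeries.constantCoeff (σ := Fin 2) (R := ℂ) (coefM 0 P).det = -(b0*b0) := by
    rw [Matrix.det_fin_two, h11eq, h10eq]
    simp only [_root_.map_sub, _root_.map_mul, _root_.map_pow]
    have ht : MvPowerSeries.constantCoeff (σ := Fin 2) (R := ℂ) t2 = 0 := MvPowerSeries.constantCoeff_X 1
    rw [ht, zero_pow (by omega : m - 2 ≠ 0)]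
    rw [hb0, MvPowerSeries.coeff_zero_eq_constantCoeff]
    ring
  have hb0ne : b0 ≠ 0 := by
    intro h
    rw [hccdet_eq, h] at hccdet
    simp at hccdet
  have hα : α = (w:ℂ)/2 := by
    have key := keyCoeff (m := m) (k := 0) (h0 0 0 1)
      (entry_h hg hp4 hp5 0 0 1 0 (he01 0)) 0 hb0ne
    have h2 := key.2
    simp only [Finsupp.coe_zero, Pi.zero_apply, Nat.cast_zero, mul_zero, add_zero, zero_mul] at h2
    linear_combination -h2/2
  subst hα
  have hv00 : ∀ k : ℕ, coefM k P 0 0 = 0 := fun k =>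
    vanish_of_key (h0 k 0 0) (entry_h hg hp4 hp5 k 0 0 2 (he00 k)) (hc_diag00 hm k)
  have hv11succ : ∀ k : ℕ, 1 ≤ k → coefM k P 1 1 = 0 := fun k hk =>
    vanish_of_key (h0 k 1 1) (entry_h hg hp4 hp5 k 1 1 (-2) (he11 k)) (hc_diag11 hm hk)
  have hv01succ : ∀ k : ℕ, 1 ≤ k → coefM k P 0 1 = 0 := fun k hk =>
    vanish_of_key (h0 k 0 1) (entry_h hg hp4 hp5 k 0 1 0 (he01 k)) (hc_offdiag hm hk)
  have hv10succ : ∀ k : ℕ, 1 ≤ k → coefM k P 1 0 = 0 := fun k hk =>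
    vanish_of_key (h0 k 1 0) (entry_h hg hp4 hp5 k 1 0 0 (he10 k)) (hc_offdiag hm hk)
  have hv11zero : coefM 0 P 1 1 = 0 := by rw [h11eq, hv00 0, mul_zero]
  have h01const : coefM 0 P 0 1 = Mc b0 := by
    apply offdiag_const hm (h0 0 0 1)
    intro d
    have := entry_h hg hp4 hp5 0 0 1 0 (he01 0) d
    rwa [Nat.cast_zero] at this
  have h10const : coefM 0 P 1 0 = Mc b0 := by rw [h10eq, h01const]
  have hgg : gg = 0 := by
    have e0 := E4succ hg hp4 0
    rw [C2T, EmT] at e0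
    have e := congrFun (congrFun e0 1) 1
    simp only [Matrix.sub_apply, Matrix.add_apply, Matrix.smul_apply, Matrix.map_apply,
      Matrix.mul_apply, Fin.sum_univ_two, smul_eq_mul] at e
    rw [hv01succ 1 le_rfl, hv10succ 1 le_rfl, hv11zero, h01const, h10const, pd_zero] at e
    simp [C2, Em] at e
    have h2 : gg * Mc b0 = 0 := by
      rcases e with h | h
      · rw [h, zero_mul]
      · exfalso
        have hc := congrArg (MvPowerSeries.constantCoeff (σ := Fin 2) (R := ℂ)) h
        rw [_root_.map_add, MvPowerSeries.constantCoeff_C, map_zero] at hc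
        exact hb0ne (by linear_combination hc / 2)
    rcases mul_eq_zero.mp h2 with h3 | h3
    · exact h3
    · exact absurd h3 (Mc_ne hb0ne)
  refine ⟨rfl, hgg, b0, hb0ne, ?_⟩
  apply mat_eq_of_coef
  intro k
  have hz : !![(0:R2), 0; 0, 0] = 0 := by
    ext i j; fin_cases i <;> fin_cases j <;> rfl
  cases k with
  | zero =>
      rw [coefM_smul_cC, coefM_zero_mR]
      rw [Matrix.eta_fin_two (coefM 0 P), hv00 0, h01const, h10const, hv11zero]
      ext i j
      fin_cases i <;> fin_cases j <;> simp [smulC2]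
  | succ n =>
      rw [coefM_smul_cC, coefM_succ_mR, smul_zero]
      rw [Matrix.eta_fin_two (coefM (n+1) P), hv00 (n+1), hv01succ (n+1) (by omega),
        hv10succ (n+1) (by omega), hv11succ (n+1) (by omega), hz]

end Main

end Aux
namespace Aux

section Suff
set_option maxHeartbeats 1000000
set_option synthInstance.maxHeartbeats 400000

def Sp : Matrix (Fin 2) (Fin 2) R2 := !![0, 1; 1, 0]

lemma smul_mR (a : ℂ) (X : Matrix (Fin 2) (Fin 2) R2) : cC a • mR X = mR (Mc a • X) := by
  ext i j
  simp only [Matrix.smul_apply, mR, Matrix.map_apply, cC, smul_eq_mul, smulC2,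
    _root_.map_mul]

lemma mR_mul (A B : Matrix (Fin 2) (Fin 2) R2) : mR A * mR B = mR (A * B) := by
  simp [mR, Matrix.map_mul]

lemma mR_sub (A B : Matrix (Fin 2) (Fin 2) R2) : mR (A - B) = mR A - mR B := by
  ext i j
  simp [mR, Matrix.sub_apply]

lemma mR_add (A B : Matrix (Fin 2) (Fin 2) R2) : mR (A + B) = mR A + mR B := by
  ext i j
  simp [mR, Matrix.add_apply]

lemma mR_zero : mR 0 = 0 := by
  ext i j
  simp [mR]

lemma pdZ_cR (i : Fin 2) (r : R2) : pdZ i (cR r) = cR (pd i r) := by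
  apply PowerSeries.ext
  intro k
  simp only [pdZ, PowerSeries.coeff_mk, cR, PowerSeries.coeff_C]
  rcases eq_or_ne k 0 with h | h
  · simp [h]
  · simp [h, pd_zero]

lemma pdM_mR (i : Fin 2) (X : Matrix (Fin 2) (Fin 2) R2) :
    pdM i (mR X) = mR (X.map (pd i)) := by
  ext a b
  simp [pdM, mR, Matrix.map_apply, pdZ_cR]

lemma dzM_mR (X : Matrix (Fin 2) (Fin 2) R2) : dzM (mR X) = 0 := by
  ext a b
  simp [dzM, mR, Matrix.map_apply, cR,
    show ∀ f : RZ, PowerSeries.derivativeFun f = PowerSeries.derivative R2 f from fun _ => rfl,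
    PowerSeries.derivative_C]

lemma pd_smul_const (i : Fin 2) (a : ℂ) (X : Matrix (Fin 2) (Fin 2) R2)
    (hX : ∀ b d : Fin 2, X b d = 0 ∨ X b d = 1) : ((Mc a • X).map (pd i)) = 0 := by
  ext b d
  rcases hX b d with h | h <;>
    simp [Matrix.map_apply, Matrix.smul_apply, smulC2, h, pd_zero, pd_C]

lemma Sp01 : ∀ b d : Fin 2, Sp b d = 0 ∨ Sp b d = 1 := by
  intro b d
  fin_cases b <;> fin_cases d <;> simp [Sp]

lemma SpT : Spᵀ = Sp := by
  ext i j
  fin_cases i <;> fin_cases j <;> rfl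

lemma C2Sp {m : ℕ} : (C2 m)ᵀ * Sp - Sp * C2 m = 0 := by
  rw [C2T]
  ext i j
  fin_cases i <;> fin_cases j <;>
    simp [C2, Sp, Matrix.mul_apply, Fin.sum_univ_two, Matrix.sub_apply]

lemma DmSp : Dm * Sp + Sp * Dm = 0 := by
  ext i j
  fin_cases i <;> fin_cases j <;>
    simp [Dm, Sp, Matrix.mul_apply, Fin.sum_univ_two, Matrix.add_apply]

lemma fNF_zero (m : ℕ) : fNF m 0 = cR 0 := by
  rw [fNF_eq]
  congr 1
  split <;> simp

lemma cC_add (a b : ℂ) : cC (a + b) = cC a + cC b := by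
  simp only [cC, map_add]

lemma sufficiency {m : ℕ} {w : ℤ} (hm : 3 ≤ m) (c : ℂ) (hc : c ≠ 0) :
    IsPairing w (mR C1) (NA₂ m (fNF m 0)) (NFB m ((w:ℂ)/2) 0) (cC c • mR Sp) := by
  have hm0 : (m:ℂ) ≠ 0 := Nat.cast_ne_zero.mpr (by omega)
  set P : Mat2 := cC c • mR Sp with hPdef
  have hPm : P = mR (Mc c • Sp) := smul_mR c Sp
  have hcomm : mR (C2 m)ᵀ * P - P * mR (C2 m) = 0 := by
    rw [hPm, mR_mul, mR_mul, ← mR_sub, Matrix.mul_smul, Matrix.smul_mul, ← smul_sub,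
      C2Sp, smul_zero, mR_zero]
  have hdm : mR Dm * P + P * mR Dm = 0 := by
    rw [hPm, mR_mul, mR_mul, ← mR_add, Matrix.mul_smul, Matrix.smul_mul, ← smul_add,
      DmSp, smul_zero, mR_zero]
  have hpd : ∀ i : Fin 2, pdM i P = 0 := by
    intro i
    rw [hPm, pdM_mR, pd_smul_const i c Sp Sp01, mR_zero]
  have hdz : dzM P = 0 := by rw [hPm, dzM_mR]
  refine ⟨?_, ?_, ?_, ?_, ?_⟩
  · -- symmetry
    have h1 : negM P = P := by
      rw [hPdef, negM_smul _ (negZ_cC c), negM_mR]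
    rw [h1, hPdef, Matrix.transpose_smul, mR_transpose, SpT]
  · -- unit
    have h2 : coefM 0 P = c • Sp := by
      rw [hPdef, coefM_smul_cC, coefM_zero_mR]
    rw [h2]
    apply (Matrix.isUnit_iff_isUnit_det _).mpr
    have h3 : (c • Sp).det = Mc (-(c*c)) := by
      simp [Matrix.det_fin_two, Matrix.smul_apply, Sp, smulC2, map_neg, _root_.map_mul]
    rw [h3]
    exact (isUnit_iff_ne_zero.mpr (neg_ne_zero.mpr (mul_ne_zero hc hc))).map Mc
  · -- hp3
    rw [mR_one, negM_one, Matrix.transpose_one, Matrix.one_mul, Matrix.mul_one, sub_self,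
      hpd 0, smul_zero]
  · -- hp4
    rw [hA2_expand (fNF_zero m), hpd 1, smul_zero, hcomm]
    rw [map_zero, mul_zero, zero_smul, add_zero]
  · -- hp5
    rw [add_sub_assoc, hB_expand (fNF_zero m), hcomm, hdm]
    rw [map_zero, mul_zero, zero_smul, smul_zero, hdz, smul_zero]
    rw [smul_zero, sub_zero]
    apply Matrix.ext
    intro i j
    simp only [Matrix.add_apply, Matrix.neg_apply, Matrix.smul_apply, Matrix.zero_apply,
      smul_eq_mul]
    rw [smulC ((w:ℂ)) (z * P i j)]
    have hw : cC ((w:ℂ)) = cC ((w:ℂ)/2) + cC ((w:ℂ)/2) := by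
      rw [← cC_add]
      norm_num
    rw [hw]
    ring

end Suff

end Aux
/-- **Corollary 8.7 of David–Hertling.** The normal form (TE)-structure `NF(α, λ)` over the
germ at 0 of the F-manifold `I₂(m)` admits a formal pairing of weight `w` if and only if
`λ = 0` and `α = w/2`; in that case the formal pairings of weight `w` are exactly the
constant matrices `c·[[0,1],[1,0]]` with `c ∈ ℂ`, `c ≠ 0`. -/
theorem TE_normal_form_pairing (m : ℕ) (hm : 3 ≤ m) (w : ℤ) (α lam : ℂ)
    (hlam : Odd m → lam = 0) :
    ((∃ P : Mat2, IsPairing w (mR C1) (NA₂ m (fNF m lam)) (NFB m α lam) P) ↔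
      lam = 0 ∧ α = (w : ℂ) / 2) ∧
    (lam = 0 → α = (w : ℂ) / 2 →
      ∀ P : Mat2, IsPairing w (mR C1) (NA₂ m (fNF m lam)) (NFB m α lam) P ↔
        ∃ c : ℂ, c ≠ 0 ∧ P = cC c • mR !![0, 1; 1, 0]) := by
  have hgg_def : fNF m lam = cR (if Even m then lam • t2 ^ ((m - 4) / 2) else 0) :=
    Aux.fNF_eq m lam
  constructor
  · constructor
    · rintro ⟨P, hP⟩
      obtain ⟨hα, hg0, -⟩ := Aux.necessity hm hgg_def hP
      refine ⟨?_, hα⟩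
      by_cases he : Even m
      · rw [if_pos he] at hg0
        rw [Aux.smulC2] at hg0
        rcases mul_eq_zero.mp hg0 with h | h
        · by_contra hne
          exact Aux.Mc_ne hne h
        · exact absurd h (pow_ne_zero _ Aux.t2_ne)
      · exact hlam (Nat.not_even_iff_odd.mp he)
    · rintro ⟨hl, ha⟩
      subst hl
      subst ha
      exact ⟨cC 1 • mR Aux.Sp, Aux.sufficiency hm 1 one_ne_zero⟩
  · intro hl ha P
    subst hl
    subst ha
    constructor
    · intro hP
      obtain ⟨-, -, c, hc, hPc⟩ := Aux.necessity hm hgg_def hP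
      exact ⟨c, hc, hPc⟩
    · rintro ⟨c, hc, rfl⟩
      exact Aux.sufficiency (w := w) hm c hc

end
end

section
/- Let m ≥ 4 be an even integer and α, λ ∈ ℂ. Let B = (−t₁C₁ − (2/m)t₂C₂) + z·(α·C₁ + ((2−m)/(2m))·D − (2λ/m)·t₂^{(m−2)/2}·E) be the B-matrix of the normal form (TE)-structure NF(α, λ) over I₂(m). Set τ = t₂^{(m−2)/2} and T = [[τ, −τ],[1, 1]], which is invertible over the localization R[t₂^{−1}] with inverse T^{−1} = (1/(2τ))·[[1, τ],[−1, τ]]. Then T^{−1}·B·T = (−t₁·1₂ − (2/m)·t₂·τ·D) + z·[[α − λ/m, −(2−m)/(2m) − λ/m],[−(2−m)/(2m) + λ/m, α + λ/m]]. In particular the diagonal entries of the z-linear coefficient of T^{−1}BT, which are the regular singular exponents of this (TE)-structure, are α − λ/m and α + λ/m. -/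
set_option maxHeartbeats 1600000


open Matrix

noncomputable section

/-- The localization `R[t₂⁻¹]` of `R = ℂ[[t₁,t₂]]` at `t₂`. -/
abbrev Lt2 : Type := Localization.Away t2

/-- `R[t₂⁻¹][[z]]`. -/
abbrev LZ : Type := PowerSeries Lt2

/-- The canonical map `R → R[t₂⁻¹][[z]]`. -/
def ℓ : R2 →+* LZ := (PowerSeries.C (R := Lt2)).comp (algebraMap R2 Lt2)

/-- Complex constants in `R[t₂⁻¹][[z]]`. -/
def ccL (a : ℂ) : LZ := ℓ (MvPowerSeries.C (σ := Fin 2) (R := ℂ) a)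

/-- Matrices over `R[[z]]` mapped into `R[t₂⁻¹][[z]]`, entrywise. -/
def mL (X : Mat2) : Matrix (Fin 2) (Fin 2) LZ :=
  X.map (PowerSeries.map (algebraMap R2 Lt2))

/-- `τ = t₂^{(m−2)/2}` as an element of `R[t₂⁻¹][[z]]`. -/
def τ (m : ℕ) : LZ := ℓ (t2 ^ ((m - 2) / 2))

/-- **Theorem 8.6(i) of David–Hertling (computational content).** For even `m ≥ 4`, the base
change by `T = [[τ, −τ],[1, 1]]` (with `τ = t₂^{(m−2)/2}`, invertible over `R[t₂⁻¹]`, and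
`T⁻¹ = (1/(2τ))·[[1, τ],[−1, τ]]`) conjugates the matrix `B` of the normal form `NF(α, λ)`
into `(−t₁·1₂ − (2/m)t₂τ·D) + z·[[α − λ/m, −(2−m)/(2m) − λ/m],[−(2−m)/(2m) + λ/m, α + λ/m]]`;
in particular the regular singular exponents are `α ∓ λ/m`. -/
theorem TE_normal_form_regular_singular_exponents (m : ℕ) (hm : 4 ≤ m) (hme : Even m)
    (α lam : ℂ) :
    (!![(1 : LZ), τ m; -1, τ m] * !![τ m, -(τ m); (1 : LZ), 1]
        = ((2 : LZ) * τ m) • (1 : Matrix (Fin 2) (Fin 2) LZ)) ∧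
    (Ring.inverse ((2 : LZ) * τ m) • !![(1 : LZ), τ m; -1, τ m]) * !![τ m, -(τ m); (1 : LZ), 1]
        = 1 ∧
    !![τ m, -(τ m); (1 : LZ), 1] * (Ring.inverse ((2 : LZ) * τ m) • !![(1 : LZ), τ m; -1, τ m])
        = 1 ∧
    (Ring.inverse ((2 : LZ) * τ m) • !![(1 : LZ), τ m; -1, τ m]) * mL (NFB m α lam)
        * !![τ m, -(τ m); (1 : LZ), 1]
      = (-(ℓ t1)) • (1 : Matrix (Fin 2) (Fin 2) LZ)
          - (ccL ((2 : ℂ) / (m : ℂ)) * ℓ t2 * τ m) • !![(1 : LZ), 0; 0, -1]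
          + (PowerSeries.X : LZ) •
            !![ccL (α - lam / (m : ℂ)),
               ccL (-(((2 : ℂ) - (m : ℂ)) / (2 * (m : ℂ))) - lam / (m : ℂ));
               ccL (-(((2 : ℂ) - (m : ℂ)) / (2 * (m : ℂ))) + lam / (m : ℂ)),
               ccL (α + lam / (m : ℂ))] := by
  classical
  -- τ and 2 are units
  have hτu : IsUnit (τ m) := by
    have h := ((IsLocalization.Away.algebraMap_isUnit (S := Lt2) t2).pow ((m-2)/2)).map
      (PowerSeries.C (R := Lt2))
    simpa [τ, ℓ, map_pow] using h
  have h2u : IsUnit (2 : LZ) := by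
    have h1 : IsUnit (2 : ℂ) := isUnit_iff_ne_zero.mpr two_ne_zero
    have h2 := ((h1.map (MvPowerSeries.C (σ := Fin 2) (R := ℂ))).map (algebraMap R2 Lt2)).map
      (PowerSeries.C (R := Lt2))
    simpa [map_ofNat] using h2
  have huu : IsUnit ((2 : LZ) * τ m) := h2u.mul hτu
  have hST : !![(1 : LZ), τ m; -1, τ m] * !![τ m, -(τ m); (1 : LZ), 1]
      = ((2 : LZ) * τ m) • (1 : Matrix (Fin 2) (Fin 2) LZ) := by
    refine Matrix.ext fun i j => ?_
    fin_cases i <;> fin_cases j <;>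
      simp [Matrix.mul_apply, Fin.sum_univ_two, Matrix.one_apply, smul_eq_mul] <;> ring
  have hTS : !![τ m, -(τ m); (1 : LZ), 1] * !![(1 : LZ), τ m; -1, τ m]
      = ((2 : LZ) * τ m) • (1 : Matrix (Fin 2) (Fin 2) LZ) := by
    refine Matrix.ext fun i j => ?_
    fin_cases i <;> fin_cases j <;>
      simp [Matrix.mul_apply, Fin.sum_univ_two, Matrix.one_apply, smul_eq_mul] <;> ring
  refine ⟨hST, ?_, ?_, ?_⟩
  · rw [Matrix.smul_mul, hST, smul_smul, Ring.inverse_mul_cancel _ huu, one_smul]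
  · rw [Matrix.mul_smul, hTS, smul_smul, Ring.inverse_mul_cancel _ huu, one_smul]
  · -- the matrix of NFB over the localization
    have hB : mL (NFB m α lam)
        = !![ -(ℓ t1) + PowerSeries.X * (ccL α + ccL (((2:ℂ)-(m:ℂ))/(2*(m:ℂ)))),
              -(ccL ((2:ℂ)/(m:ℂ)) * ℓ t2 * (τ m * τ m))
                - PowerSeries.X * (ccL ((2:ℂ)/(m:ℂ)) * ccL lam * τ m);
              -(ccL ((2:ℂ)/(m:ℂ)) * ℓ t2),
              -(ℓ t1) + PowerSeries.X * (ccL α - ccL (((2:ℂ)-(m:ℂ))/(2*(m:ℂ))))] := by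
      obtain ⟨n, hn⟩ := hme
      have hMc : ∀ x : R2, (PowerSeries.map (algebraMap R2 Lt2)) (cR x)
          = (PowerSeries.C (R := Lt2)) (algebraMap R2 Lt2 x) := fun x => PowerSeries.map_C _ _
      have hfe : fNF m lam = cR (lam • t2 ^ ((m - 4) / 2)) := by
        rw [fNF, if_pos ⟨n, hn⟩]
      have e1 : (ℓ t2)^(m-2) = (ℓ t2)^((m-2)/2) * (ℓ t2)^((m-2)/2) := by
        rw [← pow_add]; congr 1; omega
      have e2 : (ℓ t2) * (ℓ t2)^((m-4)/2) = (ℓ t2)^((m-2)/2) := by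
        rw [← pow_succ']; congr 1; omega
      simp only [ℓ, RingHom.coe_comp, Function.comp_apply] at e1 e2
      refine Matrix.ext fun i j => ?_
      fin_cases i <;> fin_cases j <;>
        simp [NFB, mL, mR, C1, C2, Dm, Em, hfe, cC, z, hMc, τ, ℓ, ccL,
          Matrix.one_apply, smul_eq_mul, MvPowerSeries.smul_eq_C_mul]
      · linear_combination (-(PowerSeries.C (R := Lt2) ((algebraMap R2 Lt2)
            (MvPowerSeries.C (σ := Fin 2) (R := ℂ) ((2:ℂ)/(m:ℂ)))) * PowerSeries.C (R := Lt2)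
            ((algebraMap R2 Lt2) t2))) * e1
          - (PowerSeries.X * PowerSeries.C (R := Lt2) ((algebraMap R2 Lt2)
            (MvPowerSeries.C (σ := Fin 2) (R := ℂ) ((2:ℂ)/(m:ℂ)))) * PowerSeries.C (R := Lt2)
            ((algebraMap R2 Lt2) (MvPowerSeries.C (σ := Fin 2) (R := ℂ) lam))) * e2
      · exact Or.inl (by ring)
    -- constant arithmetic
    set F : ℂ →+* LZ := ℓ.comp (MvPowerSeries.C (σ := Fin 2) (R := ℂ)) with hFdef
    have hF : ∀ a : ℂ, ccL a = F a := fun _ => rfl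
    have two_eq : (2 : LZ) = F 2 := by simp [hFdef, ℓ, map_ofNat]
    have hc : ∀ u v w : ℂ, (2:ℂ) * u = 2 * v + w
        → (2 : LZ) * ccL u = 2 * ccL v + ccL w := by
      intro u v w h
      rw [hF, hF, hF, two_eq, ← _root_.map_mul, ← _root_.map_mul, ← _root_.map_add, h]
    have hq : ccL ((2:ℂ)/(m:ℂ)) * ccL lam = ccL (2/(m:ℂ)*lam) := by
      rw [hF, hF, hF, ← _root_.map_mul]
    have hc0 : (2 : LZ) * ccL (α - lam / (m:ℂ))
        = 2 * ccL α + ccL (-(2/(m:ℂ)*lam)) := hc _ _ _ (by ring)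
    have hc1 : (2 : LZ) * ccL (-(((2:ℂ)-(m:ℂ))/(2*(m:ℂ))) - lam/(m:ℂ))
        = 2 * ccL (-(((2:ℂ)-(m:ℂ))/(2*(m:ℂ)))) + ccL (-(2/(m:ℂ)*lam)) := hc _ _ _ (by ring)
    have hc2 : (2 : LZ) * ccL (-(((2:ℂ)-(m:ℂ))/(2*(m:ℂ))) + lam/(m:ℂ))
        = 2 * ccL (-(((2:ℂ)-(m:ℂ))/(2*(m:ℂ)))) + ccL (2/(m:ℂ)*lam) := hc _ _ _ (by ring)
    have hc3 : (2 : LZ) * ccL (α + lam / (m:ℂ))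
        = 2 * ccL α + ccL (2/(m:ℂ)*lam) := hc _ _ _ (by ring)
    have hneg : ccL (-(2/(m:ℂ)*lam)) = -ccL (2/(m:ℂ)*lam) := by
      rw [hF, hF, map_neg]
    have hnb : ccL (-(((2:ℂ)-(m:ℂ))/(2*(m:ℂ)))) = -ccL (((2:ℂ)-(m:ℂ))/(2*(m:ℂ))) := by
      rw [hF, hF, map_neg]
    have key : !![(1 : LZ), τ m; -1, τ m] * mL (NFB m α lam) * !![τ m, -(τ m); (1:LZ), 1]
        = ((2 : LZ) * τ m) •
          ((-(ℓ t1)) • (1 : Matrix (Fin 2) (Fin 2) LZ)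
            - (ccL ((2 : ℂ) / (m : ℂ)) * ℓ t2 * τ m) • !![(1 : LZ), 0; 0, -1]
            + (PowerSeries.X : LZ) •
              !![ccL (α - lam / (m : ℂ)),
                 ccL (-(((2 : ℂ) - (m : ℂ)) / (2 * (m : ℂ))) - lam / (m : ℂ));
                 ccL (-(((2 : ℂ) - (m : ℂ)) / (2 * (m : ℂ))) + lam / (m : ℂ)),
                 ccL (α + lam / (m : ℂ))]) := by
      rw [hB]
      refine Matrix.ext fun i j => ?_
      fin_cases i <;> fin_cases j <;>
        simp [Matrix.mul_apply, Fin.sum_univ_two, Matrix.one_apply, smul_eq_mul,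
          Matrix.add_apply, Matrix.sub_apply, Matrix.smul_apply]
      · linear_combination (-(PowerSeries.X * τ m)) * hc0
          - (PowerSeries.X * τ m) * hneg - (PowerSeries.X * τ m) * hq
      · linear_combination (-(PowerSeries.X * τ m)) * hc1 - (PowerSeries.X * τ m) * hneg
          - (PowerSeries.X * τ m) * hq - (2 * PowerSeries.X * τ m) * hnb
      · linear_combination (-(PowerSeries.X * τ m)) * hc2
          + (PowerSeries.X * τ m) * hq - (2 * PowerSeries.X * τ m) * hnb
      · linear_combination (-(PowerSeries.X * τ m)) * hc3 + (PowerSeries.X * τ m) * hq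
    rw [Matrix.smul_mul, Matrix.smul_mul, key, smul_smul,
      Ring.inverse_mul_cancel _ huu, one_smul]


end
end

section
/- Let m ≥ 3 be an integer. Let f = Σ_{k≥0} f^{(k)}(t₂) z^k ∈ ℂ[[z]][t₂] with each f^{(k)} a polynomial in t₂ of degree at most m−4, regarded as an element of R[[z]] independent of t₁. Set A₁ = C₁ and A₂ = C₂ + z·f·E. Suppose B ∈ M₂(R[[z]]) satisfies 0 = z∂ᵢB − z²∂_zAᵢ + zAᵢ + [Aᵢ, B] for i = 1,2 and B^{(0)} = −t₁·C₁ − (2/m)·t₂·C₂. Then: (1) f = 0 if m is odd, and f = λ·t₂^{(m−4)/2} for some λ ∈ ℂ if m is even; (2) there exists b₁ ∈ ℂ[[z]] (independent of t₁, t₂) such that B = (−t₁ + z·b₁)·C₁ − (2/m)·t₂·C₂ + z·((2−m)/(2m))·D − z·(2/m)·t₂·f·E. -/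
noncomputable section

/-! ### Auxiliary infrastructure -/

open MvPowerSeries Finsupp in
lemma coeff_pd (i : Fin 2) (d : Fin 2 →₀ ℕ) (f : R2) :
    MvPowerSeries.coeff (R := ℂ) d (pd i f)
      = ((d i : ℂ) + 1) * MvPowerSeries.coeff (R := ℂ) (d + Finsupp.single i 1) f := rfl

section Infra

open MvPowerSeries Finsupp

lemma coeff_dF {R : Type*} [CommSemiring R] (f : PowerSeries R) (n : ℕ) :
    PowerSeries.coeff n f.derivativeFun = PowerSeries.coeff (n + 1) f * (n + 1) :=
  PowerSeries.coeff_derivative f n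

lemma dF_C {R : Type*} [CommSemiring R] (r : R) :
    PowerSeries.derivativeFun (PowerSeries.C r) = 0 :=
  PowerSeries.derivative_C

lemma pd_add (i : Fin 2) (f g : R2) : pd i (f + g) = pd i f + pd i g := by
  ext d; simp [coeff_pd, mul_add]

lemma pd_smul (i : Fin 2) (c : ℂ) (f : R2) : pd i (c • f) = c • pd i f := by
  ext d; simp [coeff_pd]; ring

lemma pd_zero (i : Fin 2) : pd i 0 = 0 := by ext d; simp [coeff_pd]

lemma pd_neg (i : Fin 2) (f : R2) : pd i (-f) = -pd i f := by
  ext d; simp [coeff_pd]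

lemma pd_sub (i : Fin 2) (f g : R2) : pd i (f - g) = pd i f - pd i g := by
  ext d; simp [coeff_pd, mul_sub]

lemma pd_C (i : Fin 2) (a : ℂ) : pd i (MvPowerSeries.C (σ := Fin 2) (R := ℂ) a) = 0 := by
  ext d
  rw [coeff_pd, coeff_C]
  rw [if_neg, map_zero, mul_zero]
  intro h
  have := (Finsupp.ext_iff.mp h) i
  simp at this

lemma pd_one (i : Fin 2) : pd i (1 : R2) = 0 := by
  rw [← map_one (MvPowerSeries.C (σ := Fin 2) (R := ℂ)), pd_C]

lemma pd1_t2 : pd 1 t2 = 1 := by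
  ext d
  rw [coeff_pd, t2, MvPowerSeries.coeff_X, MvPowerSeries.coeff_one]
  by_cases h : d = 0
  · subst h; simp
  · rw [if_neg h, if_neg, mul_zero]
    intro hc
    apply h
    have h1 := (Finsupp.ext_iff.mp hc) 1
    ext i
    have h2 := (Finsupp.ext_iff.mp hc) i
    fin_cases i <;> simp_all

lemma coeff_eq_zero_of_pd_eq_zero {i : Fin 2} {g : R2} (h : pd i g = 0)
    {d : Fin 2 →₀ ℕ} (hd : d i ≠ 0) : coeff (R := ℂ) d g = 0 := by
  have h1 : Finsupp.single i 1 ≤ d := by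
    rw [Finsupp.single_le_iff]; omega
  set e := d - Finsupp.single i 1 with he
  have h2 := congrArg (coeff (R := ℂ) e) h
  rw [coeff_pd, map_zero, he, tsub_add_cancel_of_le h1] at h2
  have h3 : ((e i : ℂ) + 1) ≠ 0 := Nat.cast_add_one_ne_zero _
  exact (mul_eq_zero.mp h2).resolve_left h3

lemma eq_C_of_pd {g : R2} (h0 : pd 0 g = 0) (h1 : pd 1 g = 0) :
    g = MvPowerSeries.C (σ := Fin 2) (R := ℂ) (constantCoeff (σ := Fin 2) (R := ℂ) g) := by
  ext d
  rw [coeff_C]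
  by_cases hd : d = 0
  · simp [hd, coeff_zero_eq_constantCoeff]
  · rw [if_neg hd]
    rcases Finsupp.ne_iff.mp hd with ⟨i, hi⟩
    fin_cases i
    · exact coeff_eq_zero_of_pd_eq_zero h0 (by simpa using hi)
    · exact coeff_eq_zero_of_pd_eq_zero h1 (by simpa using hi)

/-- image in `ℂ[[X]]` keeping only the `t₂`-monomials -/
def toP (g : R2) : PowerSeries ℂ :=
  PowerSeries.mk fun n => coeff (R := ℂ) (Finsupp.single 1 n) g

lemma toP_coeff (g : R2) (n : ℕ) :
    PowerSeries.coeff (R := ℂ) n (toP g) = coeff (R := ℂ) (Finsupp.single 1 n) g := PowerSeries.coeff_mk _ _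

lemma toP_add (g h : R2) : toP (g + h) = toP g + toP h := by
  ext n; simp [toP_coeff]

lemma toP_smul (c : ℂ) (g : R2) : toP (c • g) = c • toP g := by
  ext n; simp [toP_coeff]

lemma toP_neg (g : R2) : toP (-g) = - toP g := by ext n; simp [toP_coeff]

lemma toP_sub (g h : R2) : toP (g - h) = toP g - toP h := by ext n; simp [toP_coeff]

lemma toP_zero : toP 0 = 0 := by ext n; simp [toP_coeff]

lemma toP_C (a : ℂ) : toP (MvPowerSeries.C (σ := Fin 2) (R := ℂ) a) = PowerSeries.C (R := ℂ) a := by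
  ext n
  rw [toP_coeff, MvPowerSeries.coeff_C, PowerSeries.coeff_C]
  by_cases h : n = 0
  · simp [h]
  · rw [if_neg (by simpa using h), if_neg h]

lemma toP_t2pow_mul (j : ℕ) (g : R2) : toP (t2 ^ j * g) = PowerSeries.X ^ j * toP g := by
  ext n
  rw [toP_coeff, t2, MvPowerSeries.X_pow_eq, MvPowerSeries.coeff_monomial_mul,
    PowerSeries.coeff_X_pow_mul']
  by_cases h : j ≤ n
  · rw [if_pos (by rwa [Finsupp.single_le_iff, Finsupp.single_eq_same]), if_pos h, one_mul,
      toP_coeff, ← Finsupp.single_tsub]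
  · rw [if_neg, if_neg h]
    rw [Finsupp.single_le_iff, Finsupp.single_eq_same]
    exact h

lemma toP_t2_mul (g : R2) : toP (t2 * g) = PowerSeries.X * toP g := by
  have := toP_t2pow_mul 1 g
  simpa using this

lemma toP_pd1 (g : R2) : toP (pd 1 g) = PowerSeries.derivativeFun (toP g) := by
  ext n
  rw [toP_coeff, coeff_dF, coeff_pd, toP_coeff,
    Finsupp.single_eq_same, ← Finsupp.single_add]
  ring

lemma toP_C_mul (a : ℂ) (g : R2) :
    toP (MvPowerSeries.C (σ := Fin 2) (R := ℂ) a * g) = PowerSeries.C (R := ℂ) a * toP g := by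
  ext n
  rw [toP_coeff, MvPowerSeries.coeff_C_mul, PowerSeries.coeff_C_mul, toP_coeff]

lemma eq_zero_of_toP {g : R2} (h1 : ∀ d : Fin 2 →₀ ℕ, d 0 ≠ 0 → coeff (R := ℂ) d g = 0)
    (h2 : toP g = 0) : g = 0 := by
  ext d
  by_cases hd : d 0 = 0
  · have hdd : d = Finsupp.single 1 (d 1) := by
      ext i; fin_cases i <;> simp [hd]
    have := congrArg (PowerSeries.coeff (R := ℂ) (d 1)) h2
    rw [toP_coeff, map_zero] at this
    rw [hdd]; simpa using this
  · simpa using h1 d hd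

/-- convolution coefficient lemma: if all coefficients of `y` below `k` vanish
except possibly the `j`-th one, only two terms survive. -/
lemma conv2 (x y : RZ) (k j : ℕ) (hj : j < k)
    (hy : ∀ b, b < k → b ≠ j → PowerSeries.coeff (R := R2) b y = 0) :
    PowerSeries.coeff (R := R2) k (x * y)
      = PowerSeries.coeff (R := R2) (k - j) x * PowerSeries.coeff (R := R2) j y
        + PowerSeries.coeff (R := R2) 0 x * PowerSeries.coeff (R := R2) k y := by
  rw [PowerSeries.coeff_mul, Finset.Nat.sum_antidiagonal_eq_sum_range_succ_mk]
  have hsub : ({0, k - j} : Finset ℕ) ⊆ Finset.range (k + 1) := by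
    intro i hi
    simp only [Finset.mem_insert, Finset.mem_singleton] at hi
    rw [Finset.mem_range]
    rcases hi with h | h <;> subst h <;> omega
  rw [← Finset.sum_subset hsub]
  · rw [Finset.sum_pair (by omega : (0:ℕ) ≠ k - j)]
    have h1 : k - 0 = k := by omega
    have h2 : k - (k - j) = j := by omega
    rw [h1, h2]
    ring
  · intro i hi hni
    rw [Finset.mem_range] at hi
    simp only [Finset.mem_insert, Finset.mem_singleton] at hni
    push_neg at hni
    have : k - i ≠ j := by omega
    have hlt : k - i < k := by omega
    rw [hy _ hlt this, mul_zero]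

lemma dz_zeroC : PowerSeries.derivativeFun (0 : PowerSeries ℂ) = 0 := by
  ext n; rw [coeff_dF]; simp

lemma dz_pow (n : ℕ) :
    PowerSeries.derivativeFun ((PowerSeries.X : PowerSeries ℂ) ^ (n+1))
      = ((n+1 : ℕ) : ℂ) • (PowerSeries.X : PowerSeries ℂ) ^ n := by
  ext i
  rw [coeff_dF, map_smul, PowerSeries.coeff_X_pow,
    PowerSeries.coeff_X_pow]
  by_cases h : i = n
  · subst h; simp
  · rw [if_neg (by omega), if_neg h]
    simp

lemma dz_X : PowerSeries.derivativeFun (PowerSeries.X : PowerSeries ℂ)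
    = 1 := by
  have := dz_pow 0
  simpa using this

/-- the key degree argument -/
lemma degree_key (m : ℕ) (hm : 3 ≤ m) (ρ φ : PowerSeries ℂ) (γ : ℂ)
    (hφ : ∀ n : ℕ, m ≤ n + 3 → PowerSeries.coeff (R := ℂ) n φ = 0)
    (heq : ((m : ℂ) - 2) • (PowerSeries.X ^ (m - 3) * ρ)
        + (2 : ℂ) • (PowerSeries.X ^ (m - 2) * PowerSeries.derivativeFun ρ)
      = ((2 : ℂ) / m) • (PowerSeries.X * PowerSeries.derivativeFun φ) + γ • φ) :
    ρ = 0 ∧ ∀ n : ℕ, ((2 * n : ℂ) / m + γ) * PowerSeries.coeff (R := ℂ) n φ = 0 := by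
  have hrhs : ∀ j : ℕ, m ≤ j + 3 →
      PowerSeries.coeff (R := ℂ) j
        (((2 : ℂ) / m) • (PowerSeries.X * PowerSeries.derivativeFun φ) + γ • φ) = 0 := by
    intro j hj
    rw [map_add, map_smul, map_smul, hφ j hj, smul_zero, add_zero]
    rcases Nat.eq_zero_or_pos j with h0 | hpos
    · subst h0; rw [PowerSeries.coeff_zero_X_mul, smul_zero]
    · obtain ⟨i, rfl⟩ : ∃ i, j = i + 1 := ⟨j - 1, by omega⟩
      rw [PowerSeries.coeff_succ_X_mul, coeff_dF, hφ (i+1) (by omega),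
        zero_mul, smul_zero]
  have hρ : ρ = 0 := by
    ext n
    have h := congrArg (PowerSeries.coeff (R := ℂ) (n + (m - 3))) heq
    rw [hrhs _ (by omega), map_add, map_smul, map_smul] at h
    rw [PowerSeries.coeff_X_pow_mul] at h
    have h2 : PowerSeries.coeff (R := ℂ) (n + (m - 3))
        (PowerSeries.X ^ (m-2) * PowerSeries.derivativeFun ρ)
        = (n : ℂ) * PowerSeries.coeff (R := ℂ) n ρ := by
      rcases Nat.eq_zero_or_pos n with h0 | hpos
      · subst h0
        rw [PowerSeries.coeff_X_pow_mul']
        rw [if_neg (by omega)]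
        simp
      · obtain ⟨i, rfl⟩ : ∃ i, n = i + 1 := ⟨n - 1, by omega⟩
        have : i + 1 + (m - 3) = i + (m - 2) := by omega
        rw [this, PowerSeries.coeff_X_pow_mul, coeff_dF]
        push_cast; ring
    rw [h2] at h
    have hcoef : ((m : ℂ) - 2 + 2 * n) * PowerSeries.coeff (R := ℂ) n ρ = 0 := by
      rw [smul_eq_mul, smul_eq_mul] at h
      linear_combination h
    have hne : ((m : ℂ) - 2 + 2 * n) ≠ 0 := by
      have hc : ((m : ℂ) - 2 + 2 * n) = ((m - 2 + 2 * n : ℕ) : ℂ) := by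
        rw [Nat.cast_add, Nat.cast_sub (by omega : 2 ≤ m)]
        push_cast; ring
      rw [hc]
      exact Nat.cast_ne_zero.mpr (by omega)
    simpa [map_zero] using (mul_eq_zero.mp hcoef).resolve_left hne
  refine ⟨hρ, fun n => ?_⟩
  have h := congrArg (PowerSeries.coeff (R := ℂ) n) heq
  rw [hρ, dz_zeroC] at h
  simp only [mul_zero, smul_zero, map_add, map_smul, map_zero, add_zero, zero_add] at h
  rcases Nat.eq_zero_or_pos n with h0 | hpos
  · subst h0
    rw [PowerSeries.coeff_zero_X_mul, smul_zero, zero_add, smul_eq_mul] at h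
    push_cast
    linear_combination -h
  · obtain ⟨i, rfl⟩ : ∃ i, n = i + 1 := ⟨n - 1, by omega⟩
    rw [PowerSeries.coeff_succ_X_mul, coeff_dF, smul_eq_mul,
      smul_eq_mul] at h
    push_cast
    linear_combination -h

end Infra

set_option maxHeartbeats 2000000 in
/-- **Main computation in the proof of Theorem 8.5 of David–Hertling.** Given the normal
form `(A₁, A₂) = (C₁, C₂ + z·f·E)` of the underlying (T)-structure of a (TE)-structure over
`I₂(m)`, the flatness equations for `B` and the Euler condition
`B^{(0)} = −t₁C₁ − (2/m)t₂C₂` force `f = 0` (`m` odd) resp. `f = λ t₂^{(m−4)/2}` (`m` even),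
and `B = (−t₁ + z·b₁)·C₁ − (2/m)t₂·C₂ + z·((2−m)/(2m))·D − z·(2/m)t₂·f·E` for some
`b₁ ∈ ℂ[[z]]`. -/
theorem TE_structure_B_matrix_shape (m : ℕ) (hm : 3 ≤ m) (f : RZ) (hf : PolyT2 m f)
    (B : Mat2)
    (h1 : z • pdM 0 B - (z * z) • dzM (mR C1) + z • mR C1 + (mR C1 * B - B * mR C1) = 0)
    (h2 : z • pdM 1 B - (z * z) • dzM (NA₂ m f) + z • NA₂ m f
        + (NA₂ m f * B - B * NA₂ m f) = 0)
    (h0 : coefM 0 B = -(t1 • C1) - (((2 : ℂ) / (m : ℂ)) • t2) • C2 m) :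
    ((Odd m → f = 0) ∧ (Even m → ∃ lam : ℂ, f = cR (lam • t2 ^ ((m - 4) / 2)))) ∧
    ∃ b₁ : PowerSeries ℂ,
      B = (-(cR t1) + z * PowerSeries.map (MvPowerSeries.C (σ := Fin 2) (R := ℂ)) b₁) • mR C1
          - (cC ((2 : ℂ) / (m : ℂ)) * cR t2) • mR (C2 m)
          + (z * cC (((2 : ℂ) - (m : ℂ)) / (2 * (m : ℂ)))) • mR Dm
          - (z * cC ((2 : ℂ) / (m : ℂ)) * cR t2 * f) • mR Em := by
  classical
  have hm2 : 2 ≤ m := by omega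
  have hmC : (m : ℂ) ≠ 0 := Nat.cast_ne_zero.mpr (by omega)
  have pdz0 : PowerSeries.derivativeFun (0 : RZ) = 0 := by
    ext n; rw [coeff_dF]; simp
  set α : RZ := cR (t2 ^ (m-2)) + z * f with hα
  set G : RZ := B 0 0 - B 1 1 with hGdef
  have dzα : PowerSeries.derivativeFun α = PowerSeries.derivativeFun (z * f) := by
    rw [hα]
    show PowerSeries.derivativeFun (PowerSeries.C (R := R2) (t2 ^ (m-2)) + z * f) = _
    rw [PowerSeries.derivativeFun_add, dF_C, zero_add]
  -- entrywise equations from h2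
  have E00 : z * pdZ 1 (B 0 0) + (α * B 1 0 - B 0 1) = 0 := by
    have h := (Matrix.ext_iff.mpr h2) 0 0
    simp only [NA₂, mR, C2, Em, pdM, dzM, Matrix.map_apply, Matrix.add_apply, Matrix.sub_apply,
      Matrix.smul_apply, Matrix.mul_apply, Fin.sum_univ_two, Matrix.zero_apply,
      Matrix.of_apply, Matrix.cons_val', Matrix.cons_val_zero, Matrix.cons_val_one,
      Matrix.head_cons, Matrix.head_fin_const, Matrix.empty_val', Matrix.cons_val_fin_one,
      map_zero, map_one, mul_zero, zero_add, add_zero, mul_one, one_mul, pdz0,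
      PowerSeries.derivativeFun_one, smul_eq_mul] at h
    rw [hα]
    linear_combination h
  have E01 : z * pdZ 1 (B 0 1) - (z*z) * PowerSeries.derivativeFun (z * f) + z * α
      - α * G = 0 := by
    have h := (Matrix.ext_iff.mpr h2) 0 1
    simp only [NA₂, mR, C2, Em, pdM, dzM, Matrix.map_apply, Matrix.add_apply, Matrix.sub_apply,
      Matrix.smul_apply, Matrix.mul_apply, Fin.sum_univ_two, Matrix.zero_apply,
      Matrix.of_apply, Matrix.cons_val', Matrix.cons_val_zero, Matrix.cons_val_one,
      Matrix.head_cons, Matrix.head_fin_const, Matrix.empty_val', Matrix.cons_val_fin_one,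
      map_zero, map_one, mul_zero, zero_add, add_zero, mul_one, one_mul, pdz0,
      PowerSeries.derivativeFun_one, smul_eq_mul] at h
    rw [hGdef, hα, ← dzα, hα]
    linear_combination h
  have E10 : z * pdZ 1 (B 1 0) + z + G = 0 := by
    have h := (Matrix.ext_iff.mpr h2) 1 0
    simp only [NA₂, mR, C2, Em, pdM, dzM, Matrix.map_apply, Matrix.add_apply, Matrix.sub_apply,
      Matrix.smul_apply, Matrix.mul_apply, Fin.sum_univ_two, Matrix.zero_apply,
      Matrix.of_apply, Matrix.cons_val', Matrix.cons_val_zero, Matrix.cons_val_one,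
      Matrix.head_cons, Matrix.head_fin_const, Matrix.empty_val', Matrix.cons_val_fin_one,
      map_zero, map_one, mul_zero, zero_add, add_zero, mul_one, one_mul, pdz0,
      PowerSeries.derivativeFun_one, smul_eq_mul] at h
    rw [hGdef]
    linear_combination h
  have E11 : z * pdZ 1 (B 1 1) + (B 0 1 - α * B 1 0) = 0 := by
    have h := (Matrix.ext_iff.mpr h2) 1 1
    simp only [NA₂, mR, C2, Em, pdM, dzM, Matrix.map_apply, Matrix.add_apply, Matrix.sub_apply,
      Matrix.smul_apply, Matrix.mul_apply, Fin.sum_univ_two, Matrix.zero_apply,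
      Matrix.of_apply, Matrix.cons_val', Matrix.cons_val_zero, Matrix.cons_val_one,
      Matrix.head_cons, Matrix.head_fin_const, Matrix.empty_val', Matrix.cons_val_fin_one,
      map_zero, map_one, mul_zero, zero_add, add_zero, mul_one, one_mul, pdz0,
      PowerSeries.derivativeFun_one, smul_eq_mul] at h
    rw [hα]
    linear_combination h
  -- entrywise equations from h1
  have D00 : z * pdZ 0 (B 0 0) + z = 0 := by
    have h := (Matrix.ext_iff.mpr h1) 0 0
    simp only [C1, mR, pdM, dzM, Matrix.map_apply, Matrix.add_apply, Matrix.sub_apply,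
      Matrix.smul_apply, Matrix.mul_apply, Fin.sum_univ_two, Matrix.zero_apply,
      Matrix.one_apply, Fin.zero_eq_one_iff, Nat.succ_ne_self, if_false, if_true,
      Fin.one_eq_zero_iff, ite_true, ite_false, map_zero, map_one, mul_zero, zero_add,
      add_zero, mul_one, one_mul, pdz0, PowerSeries.derivativeFun_one, smul_eq_mul] at h
    linear_combination h
  have D01 : z * pdZ 0 (B 0 1) = 0 := by
    have h := (Matrix.ext_iff.mpr h1) 0 1
    simp only [C1, mR, pdM, dzM, Matrix.map_apply, Matrix.add_apply, Matrix.sub_apply,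
      Matrix.smul_apply, Matrix.mul_apply, Fin.sum_univ_two, Matrix.zero_apply,
      Matrix.one_apply, Fin.zero_eq_one_iff, Nat.succ_ne_self, if_false, if_true,
      Fin.one_eq_zero_iff, ite_true, ite_false, map_zero, map_one, mul_zero, zero_add,
      add_zero, mul_one, one_mul, pdz0, PowerSeries.derivativeFun_one, smul_eq_mul] at h
    linear_combination h
  have D10 : z * pdZ 0 (B 1 0) = 0 := by
    have h := (Matrix.ext_iff.mpr h1) 1 0
    simp only [C1, mR, pdM, dzM, Matrix.map_apply, Matrix.add_apply, Matrix.sub_apply,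
      Matrix.smul_apply, Matrix.mul_apply, Fin.sum_univ_two, Matrix.zero_apply,
      Matrix.one_apply, Fin.zero_eq_one_iff, Nat.succ_ne_self, if_false, if_true,
      Fin.one_eq_zero_iff, ite_true, ite_false, map_zero, map_one, mul_zero, zero_add,
      add_zero, mul_one, one_mul, pdz0, PowerSeries.derivativeFun_one, smul_eq_mul] at h
    linear_combination h
  have D11 : z * pdZ 0 (B 1 1) + z = 0 := by
    have h := (Matrix.ext_iff.mpr h1) 1 1
    simp only [C1, mR, pdM, dzM, Matrix.map_apply, Matrix.add_apply, Matrix.sub_apply,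
      Matrix.smul_apply, Matrix.mul_apply, Fin.sum_univ_two, Matrix.zero_apply,
      Matrix.one_apply, Fin.zero_eq_one_iff, Nat.succ_ne_self, if_false, if_true,
      Fin.one_eq_zero_iff, ite_true, ite_false, map_zero, map_one, mul_zero, zero_add,
      add_zero, mul_one, one_mul, pdz0, PowerSeries.derivativeFun_one, smul_eq_mul] at h
    linear_combination h
  -- initial values from h0
  have hp0 : PowerSeries.coeff (R := R2) 0 (B 0 0) = -t1 := by
    have h := (Matrix.ext_iff.mpr h0) 0 0
    simp only [coefM, C1, C2, Matrix.map_apply, Matrix.neg_apply, Matrix.sub_apply,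
      Matrix.smul_apply, Matrix.one_apply, Matrix.of_apply, Matrix.cons_val',
      Matrix.cons_val_zero, Matrix.cons_val_one, Matrix.head_cons, Matrix.head_fin_const,
      Matrix.empty_val', Matrix.cons_val_fin_one, Fin.zero_eq_one_iff, Nat.succ_ne_self,
      if_false, if_true, Fin.one_eq_zero_iff, ite_true, ite_false, smul_eq_mul, mul_zero,
      mul_one, sub_zero, zero_sub, neg_neg] at h
    simpa using h
  have hq0 : PowerSeries.coeff (R := R2) 0 (B 0 1) = -((((2:ℂ)/m) • t2) * t2 ^ (m-2)) := by
    have h := (Matrix.ext_iff.mpr h0) 0 1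
    simp only [coefM, C1, C2, Matrix.map_apply, Matrix.neg_apply, Matrix.sub_apply,
      Matrix.smul_apply, Matrix.one_apply, Matrix.of_apply, Matrix.cons_val',
      Matrix.cons_val_zero, Matrix.cons_val_one, Matrix.head_cons, Matrix.head_fin_const,
      Matrix.empty_val', Matrix.cons_val_fin_one, Fin.zero_eq_one_iff, Nat.succ_ne_self,
      if_false, if_true, Fin.one_eq_zero_iff, ite_true, ite_false, smul_eq_mul, mul_zero,
      mul_one, sub_zero, zero_sub, neg_neg] at h
    simpa using h
  have hr0 : PowerSeries.coeff (R := R2) 0 (B 1 0) = -(((2:ℂ)/m) • t2) := by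
    have h := (Matrix.ext_iff.mpr h0) 1 0
    simp only [coefM, C1, C2, Matrix.map_apply, Matrix.neg_apply, Matrix.sub_apply,
      Matrix.smul_apply, Matrix.one_apply, Matrix.of_apply, Matrix.cons_val',
      Matrix.cons_val_zero, Matrix.cons_val_one, Matrix.head_cons, Matrix.head_fin_const,
      Matrix.empty_val', Matrix.cons_val_fin_one, Fin.zero_eq_one_iff, Nat.succ_ne_self,
      if_false, if_true, Fin.one_eq_zero_iff, ite_true, ite_false, smul_eq_mul, mul_zero,
      mul_one, sub_zero, zero_sub, neg_neg] at h
    simpa using h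
  have hs0 : PowerSeries.coeff (R := R2) 0 (B 1 1) = -t1 := by
    have h := (Matrix.ext_iff.mpr h0) 1 1
    simp only [coefM, C1, C2, Matrix.map_apply, Matrix.neg_apply, Matrix.sub_apply,
      Matrix.smul_apply, Matrix.one_apply, Matrix.of_apply, Matrix.cons_val',
      Matrix.cons_val_zero, Matrix.cons_val_one, Matrix.head_cons, Matrix.head_fin_const,
      Matrix.empty_val', Matrix.cons_val_fin_one, Fin.zero_eq_one_iff, Nat.succ_ne_self,
      if_false, if_true, Fin.one_eq_zero_iff, ite_true, ite_false, smul_eq_mul, mul_zero,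
      mul_one, sub_zero, zero_sub, neg_neg] at h
    simpa using h
  -- torsion-free helper
  have half : ∀ x : R2, x + x = 0 → x = 0 := by
    intro x h
    ext d
    have := congrArg (MvPowerSeries.coeff (R := ℂ) d) h
    rw [map_add, map_zero] at this
    rw [map_zero]
    linear_combination this / 2
  -- coefficient extraction helpers
  have cz : ∀ (w : RZ) (k : ℕ), PowerSeries.coeff (R := R2) (k+1) (z * w) = PowerSeries.coeff (R := R2) k w :=
    fun w k => by rw [z]; exact PowerSeries.coeff_succ_X_mul k w
  have cpd : ∀ (i : Fin 2) (w : RZ) (k : ℕ),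
      PowerSeries.coeff (R := R2) k (pdZ i w) = pd i (PowerSeries.coeff (R := R2) k w) :=
    fun i w k => PowerSeries.coeff_mk _ _
  have d0P : ∀ k : ℕ, 1 ≤ k → pd 0 (PowerSeries.coeff (R := R2) k (B 0 0)) = 0 := by
    intro k hk
    obtain ⟨j, rfl⟩ : ∃ j, k = j + 1 := ⟨k-1, by omega⟩
    have h := congrArg (PowerSeries.coeff (R := R2) (j+2)) D00
    rw [map_add, map_zero, cz, cpd] at h
    rw [z, PowerSeries.coeff_X, if_neg (by omega)] at h
    simpa using h
  have d0Q : ∀ k : ℕ, pd 0 (PowerSeries.coeff (R := R2) k (B 0 1)) = 0 := by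
    intro k
    have h := congrArg (PowerSeries.coeff (R := R2) (k+1)) D01
    rw [map_zero, cz, cpd] at h
    exact h
  have d0R : ∀ k : ℕ, pd 0 (PowerSeries.coeff (R := R2) k (B 1 0)) = 0 := by
    intro k
    have h := congrArg (PowerSeries.coeff (R := R2) (k+1)) D10
    rw [map_zero, cz, cpd] at h
    exact h
  -- α coefficients
  have αc0 : PowerSeries.coeff (R := R2) 0 α = t2 ^ (m-2) := by
    rw [hα, map_add]
    rw [show (cR (t2 ^ (m-2)) : RZ) = PowerSeries.C (R := R2) (t2 ^ (m-2)) from rfl]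
    rw [z, PowerSeries.coeff_zero_C, PowerSeries.coeff_zero_X_mul, add_zero]
  have αcs : ∀ j : ℕ, PowerSeries.coeff (R := R2) (j+1) α = PowerSeries.coeff (R := R2) j f := by
    intro j
    rw [hα, map_add, cz]
    rw [show (cR (t2 ^ (m-2)) : RZ) = PowerSeries.C (R := R2) (t2 ^ (m-2)) from rfl]
    rw [PowerSeries.coeff_C, if_neg (by omega), zero_add]
  -- G coefficients
  have hG0 : PowerSeries.coeff (R := R2) 0 G = 0 := by
    rw [hGdef, map_sub, hp0, hs0, sub_self]
  have hGsucc : ∀ k : ℕ, PowerSeries.coeff (R := R2) (k+1) G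
      = -pd 1 (PowerSeries.coeff (R := R2) k (B 1 0)) - (if k = 0 then 1 else 0) := by
    intro k
    have h := congrArg (PowerSeries.coeff (R := R2) (k+1)) E10
    rw [map_zero, map_add, map_add, cz, cpd] at h
    rw [z, PowerSeries.coeff_X] at h
    have hite : (if (k + 1 : ℕ) = 1 then (1:R2) else 0) = (if k = 0 then 1 else 0) := by
      by_cases h0 : k = 0 <;> simp [h0]
    rw [hite] at h
    linear_combination h
  have hG1 : PowerSeries.coeff (R := R2) 1 G = MvPowerSeries.C (σ := Fin 2) (R := ℂ) ((2:ℂ)/m - 1) := by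
    have h := hGsucc 0
    rw [hr0, pd_neg, pd_smul, pd1_t2, if_pos rfl] at h
    rw [h, neg_neg, MvPowerSeries.smul_eq_C_mul, mul_one, map_sub, map_one]
  -- the main induction
  have key : ∀ k : ℕ, 1 ≤ k → PowerSeries.coeff (R := R2) k (B 1 0) = 0 ∧
      ∀ n : ℕ, ((2*n + 4 : ℂ) + m * ((k:ℂ) - 1) - m) *
        MvPowerSeries.coeff (R := ℂ) (Finsupp.single 1 n) (PowerSeries.coeff (R := R2) (k-1) f) = 0 := by
    intro k
    induction k using Nat.strong_induction_on with
    | _ k IH =>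
    intro hk
    obtain ⟨j, rfl⟩ : ∃ j, k = j + 1 := ⟨k-1, by omega⟩
    have hRprev : ∀ b, 1 ≤ b → b < j+1 → PowerSeries.coeff (R := R2) b (B 1 0) = 0 :=
      fun b h1b h2b => (IH b h2b h1b).1
    have hGmid : ∀ b, 2 ≤ b → b ≤ j+1 → PowerSeries.coeff (R := R2) b G = 0 := by
      intro b h2b h3b
      obtain ⟨c, rfl⟩ : ∃ c, b = c + 1 := ⟨b-1, by omega⟩
      rw [hGsucc, hRprev c (by omega) (by omega), pd_zero, neg_zero, if_neg (by omega),
        zero_sub, neg_zero]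
    -- value of the (j+1)-st coefficient of B 0 1
    have hconv : PowerSeries.coeff (R := R2) (j+1) (α * B 1 0)
        = PowerSeries.coeff (R := R2) j f * PowerSeries.coeff (R := R2) 0 (B 1 0)
          + t2 ^ (m-2) * PowerSeries.coeff (R := R2) (j+1) (B 1 0) := by
      rw [conv2 α (B 1 0) (j+1) 0 (by omega)
        (fun b hb hb0 => hRprev b (by omega) hb)]
      rw [Nat.sub_zero, αcs, αc0]
    have hpdG : pd 1 (PowerSeries.coeff (R := R2) j G) = 0 := by
      match j with
      | 0 => rw [hG0, pd_zero]
      | 1 => rw [hG1, pd_C]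
      | (c+2) => rw [hGmid (c+2) (by omega) (by omega), pd_zero]
    have h00 := congrArg (PowerSeries.coeff (R := R2) (j+1)) E00
    rw [map_zero, map_add, map_sub, cz, cpd] at h00
    have h11 := congrArg (PowerSeries.coeff (R := R2) (j+1)) E11
    rw [map_zero, map_add, map_sub, cz, cpd] at h11
    have hpdP : pd 1 (PowerSeries.coeff (R := R2) j (B 0 0)) = 0 := by
      apply half
      have hGj : pd 1 (PowerSeries.coeff (R := R2) j (B 0 0)) - pd 1 (PowerSeries.coeff (R := R2) j (B 1 1))
          = 0 := by
        rw [← pd_sub]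
        rw [show PowerSeries.coeff (R := R2) j (B 0 0) - PowerSeries.coeff (R := R2) j (B 1 1)
            = PowerSeries.coeff (R := R2) j G by rw [hGdef, map_sub]]
        exact hpdG
      linear_combination h00 + h11 + hGj
    have hQval : PowerSeries.coeff (R := R2) (j+1) (B 0 1)
        = PowerSeries.coeff (R := R2) j f * PowerSeries.coeff (R := R2) 0 (B 1 0)
          + t2 ^ (m-2) * PowerSeries.coeff (R := R2) (j+1) (B 1 0) := by
      rw [← hconv]
      linear_combination hpdP - h00
    -- the main equation at order j+2
    have hmain := congrArg (PowerSeries.coeff (R := R2) (j+2)) E01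
    rw [map_zero, map_sub, map_add, map_sub, cz, cpd] at hmain
    have hB : PowerSeries.coeff (R := R2) (j+2) ((z*z) * PowerSeries.derivativeFun (z * f))
        = PowerSeries.coeff (R := R2) j f * ((j+1 : ℕ) : R2) := by
      rw [show (z*z) * PowerSeries.derivativeFun (z * f)
          = z * (z * PowerSeries.derivativeFun (z * f)) by ring]
      rw [cz, cz, coeff_dF, cz]
      push_cast
      ring
    have hD : PowerSeries.coeff (R := R2) (j+2) (α * G)
        = PowerSeries.coeff (R := R2) j f * MvPowerSeries.C (σ := Fin 2) (R := ℂ) ((2:ℂ)/m - 1)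
          + t2 ^ (m-2) * (-pd 1 (PowerSeries.coeff (R := R2) (j+1) (B 1 0))) := by
      rw [conv2 α G (j+2) 1 (by omega) ?hy]
      case hy =>
        intro b hb hb1
        match b with
        | 0 => exact hG0
        | (c+1) =>
          exact hGmid (c+1) (by omega) (by omega)
      rw [show j+2-1 = j+1 from rfl, αcs, αc0, hG1, hGsucc (j+1), if_neg (by omega), sub_zero]
    rw [hB, cz, αcs, hD] at hmain
    -- rewrite the Q-coefficient and split the derivative
    rw [hQval, pd_add] at hmain
    have hFr : PowerSeries.coeff (R := R2) j f * PowerSeries.coeff (R := R2) 0 (B 1 0)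
        = -(((2:ℂ)/m) • (t2 * PowerSeries.coeff (R := R2) j f)) := by
      rw [hr0, MvPowerSeries.smul_eq_C_mul, MvPowerSeries.smul_eq_C_mul]
      ring
    rw [hFr, pd_neg, pd_smul] at hmain
    have hn1 : PowerSeries.coeff (R := R2) j f * ((j+1 : ℕ) : R2)
        = ((j+1 : ℕ) : ℂ) • PowerSeries.coeff (R := R2) j f := by
      rw [MvPowerSeries.smul_eq_C_mul, map_natCast]
      ring
    have hn2 : PowerSeries.coeff (R := R2) j f * MvPowerSeries.C (σ := Fin 2) (R := ℂ) ((2:ℂ)/m - 1)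
        = ((2:ℂ)/m - 1) • PowerSeries.coeff (R := R2) j f := by
      rw [MvPowerSeries.smul_eq_C_mul]
      ring
    rw [hn1, hn2] at hmain
    -- transport to ℂ[[X]]
    have TEQ := congrArg toP hmain
    simp only [toP_add, toP_sub, toP_neg, toP_smul, toP_pd1, toP_t2_mul, toP_t2pow_mul,
      toP_C_mul, toP_zero] at TEQ
    set φh := toP (PowerSeries.coeff (R := R2) j f) with hφh
    set ρh := toP (PowerSeries.coeff (R := R2) (j+1) (B 1 0)) with hρh
    have dA : PowerSeries.derivativeFun (PowerSeries.X * φh)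
        = φh + PowerSeries.X * PowerSeries.derivativeFun φh := by
      rw [PowerSeries.derivativeFun_mul, dz_X, smul_eq_mul, smul_eq_mul]
      ring
    have dB : PowerSeries.derivativeFun (PowerSeries.X ^ (m-2) * ρh)
        = ((m-2 : ℕ) : ℂ) • (PowerSeries.X ^ (m-3) * ρh)
          + PowerSeries.X ^ (m-2) * PowerSeries.derivativeFun ρh := by
      rw [show (PowerSeries.X : PowerSeries ℂ) ^ (m-2) = PowerSeries.X ^ ((m-3)+1) by
        rw [show m-3+1 = m-2 by omega]]
      rw [PowerSeries.derivativeFun_mul, dz_pow, smul_eq_mul, smul_eq_mul]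
      rw [show m-3+1 = m-2 by omega]
      rw [MvPowerSeries.smul_eq_C_mul, MvPowerSeries.smul_eq_C_mul]
      ring
    rw [dA, dB] at TEQ
    -- the normal form required by degree_key
    have heq : ((m : ℂ) - 2) • (PowerSeries.X ^ (m - 3) * ρh)
        + (2 : ℂ) • (PowerSeries.X ^ (m - 2) * PowerSeries.derivativeFun ρh)
      = ((2 : ℂ) / m) • (PowerSeries.X * PowerSeries.derivativeFun φh)
        + ((j:ℂ) + (4 - m)/m) • φh := by
      ext n
      have TEQn := congrArg (PowerSeries.coeff (R := ℂ) n) TEQ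
      simp only [map_add, map_sub, map_neg, map_smul, map_zero, smul_eq_mul, mul_neg] at TEQn ⊢
      have hcast : ((m - 2 : ℕ) : ℂ) = (m : ℂ) - 2 := by
        rw [Nat.cast_sub hm2]; push_cast; ring
      rw [hcast] at TEQn
      push_cast at TEQn
      field_simp at TEQn ⊢
      linear_combination TEQn
    have hφcond : ∀ n : ℕ, m ≤ n + 3 → PowerSeries.coeff (R := ℂ) n φh = 0 := by
      intro n hn
      rw [hφh, toP_coeff]
      by_contra hne
      have := hf j (Finsupp.single 1 n) hne
      rw [Finsupp.single_eq_same] at this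
      omega
    obtain ⟨hρ0, hφ0⟩ := degree_key m hm ρh φh _ hφcond heq
    constructor
    · apply eq_zero_of_toP _ hρ0
      intro d hd
      exact coeff_eq_zero_of_pd_eq_zero (d0R (j+1)) hd
    · intro n
      have h2 := hφ0 n
      have hfac : ((2*n + 4 : ℂ) + m * (((j+1:ℕ):ℂ) - 1) - m)
          = m * ((2 * n : ℂ) / m + ((j:ℂ) + (4 - m)/m)) := by
        field_simp
        push_cast
        ring
      rw [show (j+1-1 : ℕ) = j from rfl]
      rw [show MvPowerSeries.coeff (R := ℂ) (Finsupp.single 1 n) (PowerSeries.coeff (R := R2) j f)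
          = PowerSeries.coeff (R := ℂ) n φh by rw [hφh, toP_coeff]]
      rw [hfac, mul_assoc, h2, mul_zero]
  -- consequences of the induction
  have hRzero : ∀ k : ℕ, 1 ≤ k → PowerSeries.coeff (R := R2) k (B 1 0) = 0 :=
    fun k hk => (key k hk).1
  have hFzero : ∀ j : ℕ, 1 ≤ j → PowerSeries.coeff (R := R2) j f = 0 := by
    intro j hj
    apply eq_zero_of_toP
    · intro d hd
      by_contra hne
      exact hd (hf j d hne).1
    · ext n
      rw [toP_coeff, map_zero]
      have h2 := (key (j+1) (by omega)).2 n
      rw [show (j+1-1:ℕ) = j from rfl] at h2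
      have hfac : ((2*n + 4 : ℂ) + m * (((j+1:ℕ):ℂ) - 1) - m) ≠ 0 := by
        have hc : ((2*n + 4 : ℂ) + m * (((j+1:ℕ):ℂ) - 1) - m)
            = ((2*n + 4 + m*(j-1) : ℕ) : ℂ) := by
          push_cast [Nat.cast_sub hj]
          ring
        rw [hc]
        exact Nat.cast_ne_zero.mpr (by omega)
      exact (mul_eq_zero.mp h2).resolve_left hfac
  have hfC : f = cR (PowerSeries.coeff (R := R2) 0 f) := by
    refine PowerSeries.ext fun k => ?_
    rcases k with _ | k
    · rw [show (cR (PowerSeries.coeff (R := R2) 0 f) : RZ) = PowerSeries.C (R := R2) _ from rfl,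
        PowerSeries.coeff_zero_C]
    · rw [hFzero (k+1) (by omega), show (cR (PowerSeries.coeff (R := R2) 0 f) : RZ)
        = PowerSeries.C (R := R2) _ from rfl, PowerSeries.coeff_C, if_neg (by omega)]
  have key1' : ∀ n : ℕ, ((2*n + 4 : ℂ) - m) *
      MvPowerSeries.coeff (R := ℂ) (Finsupp.single 1 n) (PowerSeries.coeff (R := R2) 0 f) = 0 := by
    intro n
    have h2 := (key 1 (by omega)).2 n
    rw [show (1-1:ℕ) = 0 from rfl] at h2
    push_cast at h2 ⊢
    linear_combination h2
  constructor
  · constructor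
    · intro hodd
      rw [hfC]
      have hF00 : PowerSeries.coeff (R := R2) 0 f = 0 := by
        apply eq_zero_of_toP
        · intro d hd
          by_contra hne
          exact hd (hf 0 d hne).1
        · ext n
          rw [toP_coeff, map_zero]
          refine (mul_eq_zero.mp (key1' n)).resolve_left ?_
          intro hc
          have hmn : (m:ℂ) = ((2*n+4 : ℕ) : ℂ) := by push_cast; linear_combination -hc
          have : m = 2*n+4 := Nat.cast_injective hmn
          rcases hodd with ⟨l, hl⟩
          omega
      rw [hF00, map_zero]
    · intro heven
      have hm4 : 4 ≤ m := by
        rcases heven with ⟨l, hl⟩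
        omega
      have h2q : 2 * ((m-4)/2) = m - 4 := by
        rcases heven with ⟨l, hl⟩
        omega
      refine ⟨MvPowerSeries.coeff (R := ℂ) (Finsupp.single 1 ((m-4)/2)) (PowerSeries.coeff (R := R2) 0 f), ?_⟩
      have hF0eq : PowerSeries.coeff (R := R2) 0 f
          = MvPowerSeries.coeff (R := ℂ) (Finsupp.single 1 ((m-4)/2)) (PowerSeries.coeff (R := R2) 0 f)
            • t2 ^ ((m-4)/2) := ?_
      · conv_lhs => rw [hfC]
        exact congrArg cR hF0eq
      ext d
      rw [map_smul, smul_eq_mul, t2, MvPowerSeries.X_pow_eq, MvPowerSeries.coeff_monomial]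
      by_cases hd0 : d 0 = 0
      · have hdd : d = Finsupp.single 1 (d 1) := by
          ext i
          fin_cases i <;> simp [hd0]
        by_cases hn : 2 * (d 1) + 4 = m
        · have hq : d 1 = (m-4)/2 := by omega
          rw [hdd, hq, if_pos rfl, mul_one]
        · have hL : MvPowerSeries.coeff (R := ℂ) d (PowerSeries.coeff (R := R2) 0 f) = 0 := by
            rw [hdd]
            refine (mul_eq_zero.mp (key1' (d 1))).resolve_left ?_
            intro hc
            have hmn : (m:ℂ) = ((2*(d 1)+4 : ℕ) : ℂ) := by push_cast; linear_combination -hc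
            exact hn (Nat.cast_injective hmn).symm
          have hne' : d ≠ Finsupp.single 1 ((m-4)/2) := by
            intro hc
            have := congrArg (fun e : Fin 2 →₀ ℕ => e 1) hc
            simp only [Finsupp.single_eq_same] at this
            omega
          rw [hL, if_neg hne', mul_zero]
      · have hL : MvPowerSeries.coeff (R := ℂ) d (PowerSeries.coeff (R := R2) 0 f) = 0 := by
          by_contra hne
          exact hd0 (hf 0 d hne).1
        have hne' : d ≠ Finsupp.single 1 ((m-4)/2) := by
          intro hc
          apply hd0
          rw [hc]
          rw [Finsupp.single_apply]
          simp
        rw [hL, if_neg hne', mul_zero]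
  -- shape of B
  have hGz : ∀ b, 2 ≤ b → PowerSeries.coeff (R := R2) b G = 0 := by
    intro b hb
    obtain ⟨c, rfl⟩ : ∃ c, b = c + 1 := ⟨b-1, by omega⟩
    rw [hGsucc, hRzero c (by omega), pd_zero, neg_zero, if_neg (by omega), zero_sub, neg_zero]
  have hQP : ∀ k : ℕ, PowerSeries.coeff (R := R2) (k+1) (B 0 1)
      = PowerSeries.coeff (R := R2) k f * PowerSeries.coeff (R := R2) 0 (B 1 0)
      ∧ pd 1 (PowerSeries.coeff (R := R2) k (B 0 0)) = 0 := by
    intro k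
    have hconv : PowerSeries.coeff (R := R2) (k+1) (α * B 1 0)
        = PowerSeries.coeff (R := R2) k f * PowerSeries.coeff (R := R2) 0 (B 1 0) := by
      rw [conv2 α (B 1 0) (k+1) 0 (by omega) (fun b hb hb0 => hRzero b (by omega))]
      rw [Nat.sub_zero, αcs, αc0, hRzero (k+1) (by omega), mul_zero, add_zero]
    have hpdG : pd 1 (PowerSeries.coeff (R := R2) k G) = 0 := by
      match k with
      | 0 => rw [hG0, pd_zero]
      | 1 => rw [hG1, pd_C]
      | (c+2) => rw [hGz (c+2) (by omega), pd_zero]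
    have h00 := congrArg (PowerSeries.coeff (R := R2) (k+1)) E00
    rw [map_zero, map_add, map_sub, cz, cpd] at h00
    have h11 := congrArg (PowerSeries.coeff (R := R2) (k+1)) E11
    rw [map_zero, map_add, map_sub, cz, cpd] at h11
    have hpdP : pd 1 (PowerSeries.coeff (R := R2) k (B 0 0)) = 0 := by
      apply half
      have hGj : pd 1 (PowerSeries.coeff (R := R2) k (B 0 0))
          - pd 1 (PowerSeries.coeff (R := R2) k (B 1 1)) = 0 := by
        rw [← pd_sub]
        rw [show PowerSeries.coeff (R := R2) k (B 0 0) - PowerSeries.coeff (R := R2) k (B 1 1)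
            = PowerSeries.coeff (R := R2) k G by rw [hGdef, map_sub]]
        exact hpdG
      linear_combination h00 + h11 + hGj
    exact ⟨by rw [← hconv]; linear_combination hpdP - h00, hpdP⟩
  have hPconst : ∀ k : ℕ, 1 ≤ k → PowerSeries.coeff (R := R2) k (B 0 0)
      = MvPowerSeries.C (σ := Fin 2) (R := ℂ)
        (MvPowerSeries.constantCoeff (σ := Fin 2) (R := ℂ) (PowerSeries.coeff (R := R2) k (B 0 0))) :=
    fun k hk => eq_C_of_pd (d0P k hk) (hQP k).2
  have hSG : ∀ k : ℕ, PowerSeries.coeff (R := R2) k (B 1 1)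
      = PowerSeries.coeff (R := R2) k (B 0 0) - PowerSeries.coeff (R := R2) k G := by
    intro k
    rw [hGdef, map_sub]
    ring
  set b1 : PowerSeries ℂ := PowerSeries.mk (fun k =>
    MvPowerSeries.constantCoeff (σ := Fin 2) (R := ℂ) (PowerSeries.coeff (R := R2) (k+1) (B 0 0))
      - (if k = 0 then ((2:ℂ)-m)/(2*m) else 0)) with hb1
  refine ⟨b1, ?_⟩
  refine Matrix.ext_iff.mp ?_
  simp only [Fin.forall_fin_two]
  refine ⟨⟨?_, ?_⟩, ?_, ?_⟩
  · -- entry (0,0)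
    simp only [C1, C2, Dm, Em, mR, Matrix.map_apply, Matrix.add_apply, Matrix.sub_apply,
      Matrix.smul_apply, Matrix.one_apply, Matrix.of_apply, Matrix.cons_val',
      Matrix.cons_val_zero, Matrix.cons_val_one, Matrix.head_cons, Matrix.head_fin_const,
      Matrix.empty_val', Matrix.cons_val_fin_one, Fin.zero_eq_one_iff, Fin.one_eq_zero_iff,
      Nat.succ_ne_self, if_true, if_false, ite_true, ite_false, map_zero, map_one,
      map_neg, smul_eq_mul, mul_zero, mul_one, sub_zero, add_zero, zero_add, zero_sub]
    refine PowerSeries.ext fun k => ?_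
    rcases k with _ | k
    · rw [hp0]
      rw [map_add, map_add, map_neg]
      rw [show (cR t1 : RZ) = PowerSeries.C (R := R2) t1 from rfl, PowerSeries.coeff_zero_C]
      rw [show (z * PowerSeries.map (MvPowerSeries.C (σ := Fin 2) (R := ℂ)) b1 : RZ)
          = PowerSeries.X * PowerSeries.map (MvPowerSeries.C (σ := Fin 2) (R := ℂ)) b1 from rfl,
        PowerSeries.coeff_zero_X_mul]
      rw [show (z * cC (((2:ℂ) - m) / (2 * m)) : RZ)
          = PowerSeries.X * cC (((2:ℂ) - m) / (2 * m)) from rfl,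
        PowerSeries.coeff_zero_X_mul]
      ring
    · rw [hPconst (k+1) (by omega)]
      rw [map_add, map_add, map_neg]
      rw [show (cR t1 : RZ) = PowerSeries.C (R := R2) t1 from rfl, PowerSeries.coeff_C,
        if_neg (by omega)]
      rw [cz, cz, PowerSeries.coeff_map, PowerSeries.coeff_mk]
      rw [show (cC (((2:ℂ) - m) / (2 * m)) : RZ)
          = PowerSeries.C (R := R2) (MvPowerSeries.C (σ := Fin 2) (R := ℂ) (((2:ℂ) - m) / (2 * m))) from rfl,
        PowerSeries.coeff_C]
      by_cases hk0 : k = 0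
      · subst hk0
        rw [if_pos rfl, if_pos rfl, neg_zero, zero_add, map_sub]
        ring
      · rw [if_neg hk0, if_neg hk0, neg_zero, zero_add, add_zero, sub_zero]
  · -- entry (0,1)
    simp only [C1, C2, Dm, Em, mR, Matrix.map_apply, Matrix.add_apply, Matrix.sub_apply,
      Matrix.smul_apply, Matrix.one_apply, Matrix.of_apply, Matrix.cons_val',
      Matrix.cons_val_zero, Matrix.cons_val_one, Matrix.head_cons, Matrix.head_fin_const,
      Matrix.empty_val', Matrix.cons_val_fin_one, Fin.zero_eq_one_iff, Fin.one_eq_zero_iff,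
      Nat.succ_ne_self, if_true, if_false, ite_true, ite_false, map_zero, map_one,
      map_neg, smul_eq_mul, mul_zero, mul_one, sub_zero, add_zero, zero_add, zero_sub]
    have hA : cC ((2:ℂ)/m) * cR t2 * cR (t2 ^ (m-2))
        = PowerSeries.C (R := R2) (MvPowerSeries.C (σ := Fin 2) (R := ℂ) ((2:ℂ)/m) * t2 * t2 ^ (m-2)) := by
      rw [show (cC ((2:ℂ)/m) : RZ)
          = PowerSeries.C (R := R2) (MvPowerSeries.C (σ := Fin 2) (R := ℂ) ((2:ℂ)/m)) from rfl]
      rw [show (cR t2 : RZ) = PowerSeries.C (R := R2) t2 from rfl]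
      rw [show (cR (t2 ^ (m-2)) : RZ) = PowerSeries.C (R := R2) (t2 ^ (m-2)) from rfl]
      rw [← map_mul, ← map_mul]
    have hB2 : z * cC ((2:ℂ)/m) * cR t2 * f
        = PowerSeries.X * (PowerSeries.C (R := R2) (MvPowerSeries.C (σ := Fin 2) (R := ℂ) ((2:ℂ)/m) * t2) * f) := by
      rw [show (cC ((2:ℂ)/m) : RZ)
          = PowerSeries.C (R := R2) (MvPowerSeries.C (σ := Fin 2) (R := ℂ) ((2:ℂ)/m)) from rfl]
      rw [show (cR t2 : RZ) = PowerSeries.C (R := R2) t2 from rfl]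
      rw [show (z:RZ) = PowerSeries.X from rfl]
      have hm' : PowerSeries.C (R := R2) (MvPowerSeries.C (σ := Fin 2) (R := ℂ) ((2:ℂ)/m)) * PowerSeries.C (R := R2) t2
          = PowerSeries.C (R := R2) (MvPowerSeries.C (σ := Fin 2) (R := ℂ) ((2:ℂ)/m) * t2) := (map_mul _ _ _).symm
      linear_combination PowerSeries.X * f * hm'
    refine PowerSeries.ext fun k => ?_
    rcases k with _ | k
    · rw [hq0, map_sub, map_neg, hA, hB2, PowerSeries.coeff_zero_C,
        PowerSeries.coeff_zero_X_mul, MvPowerSeries.smul_eq_C_mul]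
      ring
    · rw [(hQP k).1, hr0, map_sub, map_neg, hA, hB2, PowerSeries.coeff_C,
        if_neg (by omega), PowerSeries.coeff_succ_X_mul, PowerSeries.coeff_C_mul,
        MvPowerSeries.smul_eq_C_mul]
      ring
  · -- entry (1,0)
    simp only [C1, C2, Dm, Em, mR, Matrix.map_apply, Matrix.add_apply, Matrix.sub_apply,
      Matrix.smul_apply, Matrix.one_apply, Matrix.of_apply, Matrix.cons_val',
      Matrix.cons_val_zero, Matrix.cons_val_one, Matrix.head_cons, Matrix.head_fin_const,
      Matrix.empty_val', Matrix.cons_val_fin_one, Fin.zero_eq_one_iff, Fin.one_eq_zero_iff,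
      Nat.succ_ne_self, if_true, if_false, ite_true, ite_false, map_zero, map_one,
      map_neg, smul_eq_mul, mul_zero, mul_one, sub_zero, add_zero, zero_add, zero_sub]
    have hA : cC ((2:ℂ)/m) * cR t2
        = PowerSeries.C (R := R2) (MvPowerSeries.C (σ := Fin 2) (R := ℂ) ((2:ℂ)/m) * t2) := by
      rw [show (cC ((2:ℂ)/m) : RZ)
          = PowerSeries.C (R := R2) (MvPowerSeries.C (σ := Fin 2) (R := ℂ) ((2:ℂ)/m)) from rfl]
      rw [show (cR t2 : RZ) = PowerSeries.C (R := R2) t2 from rfl]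
      rw [← map_mul]
    refine PowerSeries.ext fun k => ?_
    rcases k with _ | k
    · rw [hr0, map_neg, hA, PowerSeries.coeff_zero_C, MvPowerSeries.smul_eq_C_mul]
    · rw [hRzero (k+1) (by omega), map_neg, hA, PowerSeries.coeff_C, if_neg (by omega),
        neg_zero]
  · -- entry (1,1)
    simp only [C1, C2, Dm, Em, mR, Matrix.map_apply, Matrix.add_apply, Matrix.sub_apply,
      Matrix.smul_apply, Matrix.one_apply, Matrix.of_apply, Matrix.cons_val',
      Matrix.cons_val_zero, Matrix.cons_val_one, Matrix.head_cons, Matrix.head_fin_const,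
      Matrix.empty_val', Matrix.cons_val_fin_one, Fin.zero_eq_one_iff, Fin.one_eq_zero_iff,
      Nat.succ_ne_self, if_true, if_false, ite_true, ite_false, map_zero, map_one,
      map_neg, smul_eq_mul, mul_zero, mul_one, sub_zero, add_zero, zero_add, zero_sub]
    have e1 : (-cR t1 + z * PowerSeries.map (MvPowerSeries.C (σ := Fin 2) (R := ℂ)) b1
        + z * cC (((2:ℂ) - m) / (2 * m)) * -1 : RZ)
        = -cR t1 + z * PowerSeries.map (MvPowerSeries.C (σ := Fin 2) (R := ℂ)) b1
          + z * (-(cC (((2:ℂ) - m) / (2 * m)))) := by ring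
    rw [e1]
    refine PowerSeries.ext fun k => ?_
    rcases k with _ | k
    · rw [hs0]
      rw [map_add, map_add, map_neg]
      rw [show (cR t1 : RZ) = PowerSeries.C (R := R2) t1 from rfl, PowerSeries.coeff_zero_C]
      rw [show (z * PowerSeries.map (MvPowerSeries.C (σ := Fin 2) (R := ℂ)) b1 : RZ)
          = PowerSeries.X * PowerSeries.map (MvPowerSeries.C (σ := Fin 2) (R := ℂ)) b1 from rfl,
        PowerSeries.coeff_zero_X_mul]
      rw [show (z * (-(cC (((2:ℂ) - m) / (2 * m)))) : RZ)
          = PowerSeries.X * (-(cC (((2:ℂ) - m) / (2 * m)))) from rfl,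
        PowerSeries.coeff_zero_X_mul]
      ring
    · rw [hSG (k+1), hPconst (k+1) (by omega)]
      rw [map_add, map_add, map_neg]
      rw [show (cR t1 : RZ) = PowerSeries.C (R := R2) t1 from rfl, PowerSeries.coeff_C,
        if_neg (by omega), neg_zero]
      rw [cz, cz, map_neg, PowerSeries.coeff_map, PowerSeries.coeff_mk]
      rw [show (cC (((2:ℂ) - m) / (2 * m)) : RZ)
          = PowerSeries.C (R := R2) (MvPowerSeries.C (σ := Fin 2) (R := ℂ) (((2:ℂ) - m) / (2 * m))) from rfl,
        PowerSeries.coeff_C]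
      by_cases hk0 : k = 0
      · subst hk0
        have hc : MvPowerSeries.C (σ := Fin 2) (R := ℂ) ((2:ℂ)/m - 1)
            = MvPowerSeries.C (σ := Fin 2) (R := ℂ) (((2:ℂ) - m) / (2 * m))
              + MvPowerSeries.C (σ := Fin 2) (R := ℂ) (((2:ℂ) - m) / (2 * m)) := by
          rw [← map_add]
          congr 1
          field_simp
          ring
        rw [if_pos rfl, if_pos rfl, hG1, hc, map_sub]
        ring
      · rw [if_neg hk0, if_neg hk0, hGz (k+1) (by omega), sub_zero, sub_zero]
        ring

end
end
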